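/- arXiv:1808.01362 — 2 statements merged into one kernel-verified Lean document; each statement's English description precedes it below -/
import Mathlib

section
/- Let n, k, i be integers with k ≥ 1, n ≥ 2k and i ≥ 1. Then f_{(n−k,k),i}(q) = q^{i²}·( [n−k choose i]_q·[k choose i]_q − [n−k+1 choose i]_q·[k−1 choose i]_q ) as polynomials in q. -/
open Polynomial
open scoped Classical

noncomputable section

/-- The set of cells of the skew shape `outer \ inner`, where `outer` and `inner` are
lists of row lengths (rows and columns are 0-indexed): the cell `(r, c)` is present
iff `inner.getD r 0 ≤ c < outer.getD r 0`. -/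
def skewCells (outer inner : List ℕ) : Finset (ℕ × ℕ) :=
  ((Finset.range outer.length) ×ˢ (Finset.range (outer.foldr max 0))).filter
    (fun p => inner.getD p.1 0 ≤ p.2 ∧ p.2 < outer.getD p.1 0)

/-- `pos` encodes a standard Young tableau of skew shape `outer \ inner`:
`pos k` is the cell containing the entry `k + 1`.  The conditions say that the
entries are a bijective filling which increases left to right along rows and
top to bottom down columns. -/
def IsSYT (outer inner : List ℕ)
    (pos : Fin (skewCells outer inner).card → ↥(skewCells outer inner)) : Prop :=
  Function.Injective pos ∧
  (∀ a b, ((pos a : ℕ × ℕ)).1 = ((pos b : ℕ × ℕ)).1 →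
      ((pos a : ℕ × ℕ)).2 < ((pos b : ℕ × ℕ)).2 → a < b) ∧
  (∀ a b, ((pos a : ℕ × ℕ)).2 = ((pos b : ℕ × ℕ)).2 →
      ((pos a : ℕ × ℕ)).1 < ((pos b : ℕ × ℕ)).1 → a < b)

/-- The finite set of standard Young tableaux of skew shape `outer \ inner`. -/
def SYTs (outer inner : List ℕ) :
    Finset (Fin (skewCells outer inner).card → ↥(skewCells outer inner)) :=
  Finset.univ.filter (IsSYT outer inner)

/-- The descent set of the tableau `pos`: the values `v` such that `v + 1` lies in a
strictly lower row than `v` (entry `v` is at index `v - 1`, entry `v+1` at index `v`). -/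
def desSet (outer inner : List ℕ)
    (pos : Fin (skewCells outer inner).card → ↥(skewCells outer inner)) : Finset ℕ :=
  (Finset.range (skewCells outer inner).card).filter
    (fun v => ∃ a b : Fin (skewCells outer inner).card,
      (a : ℕ) + 1 = v ∧ (b : ℕ) = v ∧ ((pos a : ℕ × ℕ)).1 < ((pos b : ℕ × ℕ)).1)

/-- The major index of a tableau: the sum of its descents. -/
def majStat (outer inner : List ℕ)
    (pos : Fin (skewCells outer inner).card → ↥(skewCells outer inner)) : ℕ :=
  (desSet outer inner pos).sum id

/-- The number of descents of a tableau. -/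
def desStat (outer inner : List ℕ)
    (pos : Fin (skewCells outer inner).card → ↥(skewCells outer inner)) : ℕ :=
  (desSet outer inner pos).card

/-- `f_{outer∖inner, i}(q) = Σ_{τ ∈ SYT(outer∖inner), des(τ) = i} q^{maj(τ)} ∈ ℤ[q]`. -/
def fSkew (outer inner : List ℕ) (i : ℕ) : Polynomial ℤ :=
  ∑ pos ∈ (SYTs outer inner).filter (fun pos => desStat outer inner pos = i),
    X ^ majStat outer inner pos

/-- `f_{λ, i}(q)` for a straight (non-skew) shape `λ`. -/
def fPoly (lam : List ℕ) (i : ℕ) : Polynomial ℤ := fSkew lam [] i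

/-- Gaussian binomial coefficients for natural arguments, via the q-Pascal recurrence
`[M+1, N+1]_q = [M, N+1]_q + q^(M-N) [M, N]_q`, with `[M, 0]_q = 1`, `[0, N+1]_q = 0`. -/
def qBinomAux : ℕ → ℕ → Polynomial ℤ
  | _, 0 => 1
  | 0, _ + 1 => 0
  | M + 1, N + 1 => qBinomAux M (N + 1) + X ^ (M - N) * qBinomAux M N

/-- Gaussian binomial coefficient `[M choose N]_q ∈ ℤ[q]`, with the convention that
it is `0` unless `0 ≤ N ≤ M`. -/
def qBinom (M N : ℤ) : Polynomial ℤ :=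
  if 0 ≤ N ∧ N ≤ M then qBinomAux M.toNat N.toNat else 0


/-! ### Auxiliary development -/

section Aux

/-- count of letters equal to `c` among the first `m` positions of the word `w`. -/
def cntB {N : ℕ} (w : Fin N → Bool) (m : ℕ) (c : Bool) : ℕ :=
  (Finset.univ.filter (fun v : Fin N => (v : ℕ) < m ∧ w v = c)).card

/-- ballot words of length `N` with `b` ones. -/
def WSet (N b : ℕ) : Finset (Fin N → Bool) :=
  Finset.univ.filter (fun w => (∀ m, cntB w m true ≤ cntB w m false) ∧ cntB w N true = b)

/-- descent (ascent) set of a word. -/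
def desW {N : ℕ} (w : Fin N → Bool) : Finset ℕ :=
  (Finset.range N).filter (fun v => ∃ a b : Fin N,
    (a : ℕ) + 1 = v ∧ (b : ℕ) = v ∧ w a = false ∧ w b = true)

/-- word generating function. -/
def WP (N b i : ℕ) : Polynomial ℤ :=
  ∑ w ∈ (WSet N b).filter (fun w => (desW w).card = i), X ^ ((desW w).sum id)

/-- RHS polynomial. -/
def Rnat (a b i : ℕ) : Polynomial ℤ :=
  X ^ (i ^ 2) * (qBinom a i * qBinom b i - qBinom ((a : ℤ) + 1) i * qBinom ((b : ℤ) - 1) i)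

/-! #### qBinomAux lemmas -/

lemma qAux_zero_right (M : ℕ) : qBinomAux M 0 = 1 := by
  cases M <;> rfl

lemma pascal (M N E : ℕ) (h : M = N + E) :
    qBinomAux (M + 1) (N + 1) = qBinomAux M (N + 1) + X ^ E * qBinomAux M N := by
  subst h
  show qBinomAux (N + E + 1) (N + 1) = _
  rw [show N + E + 1 = (N + E) + 1 from rfl]
  rw [show qBinomAux ((N + E) + 1) (N + 1) =
    qBinomAux (N + E) (N + 1) + X ^ (N + E - N) * qBinomAux (N + E) N from rfl]
  rw [show N + E - N = E from by omega]

lemma qAux_of_lt {M N : ℕ} (h : M < N) : qBinomAux M N = 0 := by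
  induction M generalizing N with
  | zero =>
    obtain ⟨N, rfl⟩ : ∃ n, N = n + 1 := ⟨N - 1, by omega⟩
    rfl
  | succ M ih =>
    obtain ⟨N, rfl⟩ : ∃ n, N = n + 1 := ⟨N - 1, by omega⟩
    rw [show qBinomAux (M + 1) (N + 1) =
      qBinomAux M (N + 1) + X ^ (M - N) * qBinomAux M N from rfl,
      ih (by omega), ih (by omega), mul_zero, add_zero]

lemma qAux_self (M : ℕ) : qBinomAux M M = 1 := by
  induction M with
  | zero => rfl
  | succ M ih =>
    rw [show qBinomAux (M + 1) (M + 1) =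
      qBinomAux M (M + 1) + X ^ (M - M) * qBinomAux M M from rfl,
      ih, qAux_of_lt (by omega), Nat.sub_self, pow_zero, zero_add, one_mul]

lemma qBinom_natCast (m i : ℕ) : qBinom (m : ℤ) (i : ℤ) = qBinomAux m i := by
  unfold qBinom
  split_ifs with h
  · simp
  · rw [qAux_of_lt]
    omega

/-! #### cntB lemmas -/

lemma cntB_snoc {M : ℕ} (u : Fin M → Bool) (c : Bool) (m : ℕ) (d : Bool) :
    cntB (Fin.snoc u c) m d = cntB u m d + (if M < m ∧ c = d then 1 else 0) := by
  unfold cntB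
  rw [Finset.card_filter, Finset.card_filter, Fin.sum_univ_castSucc]
  simp [Fin.snoc_castSucc, Fin.snoc_last]

lemma cntB_snoc_self {M : ℕ} (u : Fin M → Bool) (c : Bool) (m : ℕ) :
    cntB (Fin.snoc u c) m c = cntB u m c + (if M < m then 1 else 0) := by
  rw [cntB_snoc]
  congr 1
  simp

lemma cntB_snoc_other {M : ℕ} (u : Fin M → Bool) {c d : Bool} (h : c ≠ d) (m : ℕ) :
    cntB (Fin.snoc u c) m d = cntB u m d := by
  rw [cntB_snoc, if_neg (by simp [h]), add_zero]

lemma cntB_mono {N : ℕ} (w : Fin N → Bool) {m m' : ℕ} (h : m ≤ m') (d : Bool) :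
    cntB w m d ≤ cntB w m' d := by
  apply Finset.card_le_card
  intro v hv
  simp only [Finset.mem_filter] at *
  exact ⟨hv.1, lt_of_lt_of_le hv.2.1 h, hv.2.2⟩

lemma cntB_of_le {N : ℕ} (w : Fin N → Bool) {m : ℕ} (h : N ≤ m) (d : Bool) :
    cntB w m d = cntB w N d := by
  unfold cntB
  congr 1
  apply Finset.filter_congr
  intro v _
  simp only [v.isLt, true_and, lt_of_lt_of_le v.isLt h]

lemma cntB_lt {N : ℕ} (w : Fin N → Bool) (v : Fin N) {m : ℕ} (hv : (v : ℕ) < m)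
    (d : Bool) (hw : w v = d) : cntB w (v : ℕ) d < cntB w m d := by
  apply Finset.card_lt_card
  rw [Finset.ssubset_iff_of_subset]
  · exact ⟨v, by simp [hv, hw]⟩
  · intro u hu
    simp only [Finset.mem_filter] at *
    exact ⟨hu.1, lt_of_lt_of_le hu.2.1 (by omega), hu.2.2⟩

lemma cntB_total {N : ℕ} (w : Fin N → Bool) : cntB w N true + cntB w N false = N := by
  unfold cntB
  have h1 : ∀ d : Bool, (Finset.univ.filter (fun v : Fin N => (v : ℕ) < N ∧ w v = d)) =
      Finset.univ.filter (fun v : Fin N => w v = d) := by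
    intro d
    apply Finset.filter_congr
    intro v _
    simp [v.isLt]
  rw [h1, h1]
  have h3 := Finset.card_filter_add_card_filter_not
    (s := (Finset.univ : Finset (Fin N))) (p := fun v => w v = true)
  simp only [Finset.card_univ, Fintype.card_fin] at h3
  have h2 : (Finset.filter (fun v : Fin N => w v = false) Finset.univ) =
      (Finset.filter (fun v : Fin N => ¬ w v = true) Finset.univ) := by
    apply Finset.filter_congr
    intro v _
    simp
  rw [h2]
  exact h3

/-! #### desW lemmas -/

lemma snoc_lt {M : ℕ} (u : Fin M → Bool) (c : Bool) (x : Fin (M + 1)) (h : (x : ℕ) < M) :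
    (Fin.snoc u c : Fin (M + 1) → Bool) x = u ⟨(x : ℕ), h⟩ := by
  simp [Fin.snoc, h, Fin.castLT]

lemma desW_lt {N : ℕ} (w : Fin N → Bool) {v : ℕ} (h : v ∈ desW w) : 1 ≤ v ∧ v < N := by
  simp only [desW, Finset.mem_filter, Finset.mem_range] at h
  obtain ⟨hv, a, b, ha, hb, _⟩ := h
  omega

lemma desW_snoc_false {M : ℕ} (u : Fin M → Bool) :
    desW (Fin.snoc u false) = desW u := by
  ext v
  simp only [desW, Finset.mem_filter, Finset.mem_range]
  constructor
  · rintro ⟨hv, a, b, ha, hb, hfa, hfb⟩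
    have hbM : (b : ℕ) < M := by
      by_contra hc
      have : b = Fin.last M := by
        ext
        simp only [Fin.val_last]
        omega
      rw [this, Fin.snoc_last] at hfb
      exact absurd hfb (by simp)
    refine ⟨by omega, ⟨(a : ℕ), by omega⟩, ⟨(b : ℕ), hbM⟩, ha, hb, ?_, ?_⟩
    · rw [← snoc_lt u false a (by omega)]
      exact hfa
    · rw [← snoc_lt u false b hbM]
      exact hfb
  · rintro ⟨hv, a, b, ha, hb, hfa, hfb⟩
    refine ⟨by omega, ⟨(a : ℕ), by omega⟩, ⟨(b : ℕ), by omega⟩, ha, hb, ?_, ?_⟩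
    · rw [snoc_lt u false _ (by simpa using a.isLt)]
      exact hfa
    · rw [snoc_lt u false _ (by simpa using b.isLt)]
      exact hfb

lemma desW_snoc_true {M : ℕ} (u : Fin (M + 1) → Bool) :
    desW (Fin.snoc u true) =
      if u (Fin.last M) = false then insert (M + 1) (desW u) else desW u := by
  have hmem : ∀ v, v ∈ desW (Fin.snoc u true) ↔
      (v ∈ desW u ∨ (v = M + 1 ∧ u (Fin.last M) = false)) := by
    intro v
    simp only [desW, Finset.mem_filter, Finset.mem_range]
    constructor
    · rintro ⟨hv, a, b, ha, hb, hfa, hfb⟩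
      by_cases hbM : (b : ℕ) < M + 1
      · left
        refine ⟨by omega, ⟨(a : ℕ), by omega⟩, ⟨(b : ℕ), hbM⟩, ha, hb, ?_, ?_⟩
        · rw [← snoc_lt u true a (by omega)]
          exact hfa
        · rw [← snoc_lt u true b hbM]
          exact hfb
      · right
        have hbv : (b : ℕ) = M + 1 := by omega
        have hav : (a : ℕ) = M := by omega
        constructor
        · omega
        · rw [← hfa, snoc_lt u true a (by omega)]
          congr 1
          ext
          simp [hav]
    · rintro (⟨hv, a, b, ha, hb, hfa, hfb⟩ | ⟨hv, hu⟩)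
      · refine ⟨by omega, ⟨(a : ℕ), by omega⟩, ⟨(b : ℕ), by omega⟩, ha, hb, ?_, ?_⟩
        · rw [snoc_lt u true _ (by simpa using a.isLt)]
          exact hfa
        · rw [snoc_lt u true _ (by simpa using b.isLt)]
          exact hfb
      · subst hv
        refine ⟨by omega, ⟨M, by omega⟩, Fin.last (M + 1), by simp, by simp, ?_, by simp⟩
        rw [snoc_lt u true _ (by simp)]
        convert hu using 2
        rfl
  ext v
  rw [hmem v]
  split_ifs with h
  · simp only [Finset.mem_insert]
    constructor
    · rintro (hd | ⟨rfl, _⟩)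
      · exact Or.inr hd
      · exact Or.inl rfl
    · rintro (rfl | hd)
      · exact Or.inr ⟨rfl, h⟩
      · exact Or.inl hd
  · constructor
    · rintro (hd | ⟨rfl, hu⟩)
      · exact hd
      · exact absurd hu h
    · exact Or.inl

/-! #### WSet lemmas -/

lemma mem_WSet_snoc_false {M b : ℕ} (u : Fin M → Bool) :
    Fin.snoc u false ∈ WSet (M + 1) b ↔ u ∈ WSet M b := by
  simp only [WSet, Finset.mem_filter, Finset.mem_univ, true_and,
    cntB_snoc_self, cntB_snoc_other (h := show false ≠ true from by simp)]
  constructor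
  · rintro ⟨h1, h2⟩
    refine ⟨fun m => ?_, ?_⟩
    · by_cases hm : m ≤ M
      · have := h1 m
        rw [if_neg (by omega)] at this
        omega
      · rw [cntB_of_le u (by omega) true, cntB_of_le u (by omega) false]
        have := h1 M
        rw [if_neg (by omega)] at this
        omega
    · rw [cntB_of_le u (by omega) true] at h2
      exact h2
  · rintro ⟨h1, h2⟩
    refine ⟨fun m => ?_, ?_⟩
    · have := h1 m
      split_ifs <;> omega
    · rw [cntB_of_le u (by omega) true]
      exact h2

lemma mem_WSet_snoc_true {M b : ℕ} (u : Fin M → Bool) :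
    Fin.snoc u true ∈ WSet (M + 1) (b + 1) ↔ u ∈ WSet M b ∧ 2 * (b + 1) ≤ M + 1 := by
  have htot := cntB_total u
  simp only [WSet, Finset.mem_filter, Finset.mem_univ, true_and,
    cntB_snoc_self, cntB_snoc_other (h := show true ≠ false from by simp)]
  constructor
  · rintro ⟨h1, h2⟩
    rw [cntB_of_le u (by omega) true, if_pos (by omega)] at h2
    have hM := h1 (M + 1)
    rw [if_pos (by omega), cntB_of_le u (by omega) true,
      cntB_of_le u (by omega) false] at hM
    refine ⟨⟨fun m => ?_, by omega⟩, by omega⟩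
    · have := h1 m
      split_ifs at this <;> omega
  · rintro ⟨⟨h1, h2⟩, h3⟩
    refine ⟨fun m => ?_, ?_⟩
    · by_cases hm : m ≤ M
      · rw [if_neg (by omega)]
        have := h1 m
        omega
      · rw [if_pos (by omega), cntB_of_le u (by omega) true,
          cntB_of_le u (by omega) false]
        omega
    · rw [if_pos (by omega), cntB_of_le u (by omega) true]
      omega

lemma WSet_le {N b : ℕ} {w : Fin N → Bool} (h : w ∈ WSet N b) : 2 * b ≤ N := by
  have htot := cntB_total w
  simp only [WSet, Finset.mem_filter, Finset.mem_univ, true_and] at h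
  have := h.1 N
  omega

lemma WP_eq_zero {N b i : ℕ} (h : N < 2 * b) : WP N b i = 0 := by
  have he : WSet N b = ∅ := by
    apply Finset.eq_empty_of_forall_notMem
    intro w hw
    have := WSet_le hw
    omega
  simp [WP, he]

lemma cntB_const_false (N : ℕ) (m : ℕ) :
    cntB (fun _ : Fin N => false) m true = 0 := by
  unfold cntB
  rw [Finset.card_eq_zero]
  apply Finset.eq_empty_of_forall_notMem
  intro v
  simp

lemma WP_b_zero (N i : ℕ) : WP N 0 i = if i = 0 then 1 else 0 := by
  have hW : WSet N 0 = {fun _ => false} := by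
    ext w
    simp only [WSet, Finset.mem_filter, Finset.mem_univ, true_and, Finset.mem_singleton]
    constructor
    · rintro ⟨h1, h2⟩
      funext v
      by_contra hv
      have hv' : w v = true := by
        cases hw : w v
        · exact absurd hw hv
        · rfl
      have := cntB_lt w v (show (v : ℕ) < N from v.isLt) true hv'
      omega
    · rintro rfl
      exact ⟨fun m => by rw [cntB_const_false]; omega, cntB_const_false N N⟩
  have hdes : desW (fun _ : Fin N => false) = ∅ := by
    apply Finset.eq_empty_of_forall_notMem
    intro v hv
    simp only [desW, Finset.mem_filter, Finset.mem_range] at hv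
    obtain ⟨_, a, b, _, _, _, hb⟩ := hv
    exact absurd hb (by simp)
  unfold WP
  rw [hW]
  split_ifs with hi
  · subst hi
    rw [Finset.filter_singleton, if_pos (by rw [hdes]; rfl)]
    simp [hdes]
  · rw [Finset.filter_singleton, if_neg (by rw [hdes]; simpa using fun h => hi h.symm)]
    rfl

lemma WP_i_zero {N b : ℕ} (hb : 1 ≤ b) : WP N b 0 = 0 := by
  unfold WP
  rw [Finset.sum_eq_zero]
  intro w hw
  exfalso
  simp only [Finset.mem_filter] at hw
  obtain ⟨hwW, hdc⟩ := hw
  simp only [WSet, Finset.mem_filter, Finset.mem_univ, true_and] at hwW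
  obtain ⟨hbal, hcnt⟩ := hwW
  -- there is a true letter
  have hS : (Finset.univ.filter (fun v : Fin N => w v = true)).Nonempty := by
    rw [← Finset.card_pos]
    by_contra hc
    have h0 : (Finset.univ.filter (fun v : Fin N => w v = true)).card = 0 := by omega
    have : cntB w N true = 0 := by
      unfold cntB
      rw [Finset.card_eq_zero] at h0 ⊢
      rw [← h0]
      apply Finset.filter_congr
      intro v _
      simp [v.isLt]
    omega
  set v0 := (Finset.univ.filter (fun v : Fin N => w v = true)).min' hS with hv0
  have hv0mem := (Finset.univ.filter (fun v : Fin N => w v = true)).min'_mem hS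
  have hv0true : w v0 = true := by
    simpa using hv0mem
  have hmin : ∀ u : Fin N, u < v0 → w u = false := by
    intro u hu
    by_contra hc
    have hut : w u = true := by
      cases h : w u
      · exact absurd h hc
      · rfl
    have hmem' : u ∈ Finset.univ.filter (fun v : Fin N => w v = true) := by
      simp [hut]
    have := Finset.min'_le _ u hmem' 
    exact absurd this (not_le.mpr hu)
  -- ballot at v0 + 1 gives a false letter before v0
  have h1 : 1 ≤ cntB w ((v0 : ℕ) + 1) true := by
    have := cntB_lt w v0 (show (v0 : ℕ) < (v0 : ℕ) + 1 by omega) true hv0true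
    omega
  have h2 : 1 ≤ cntB w ((v0 : ℕ) + 1) false := le_trans h1 (hbal _)
  have h3 : ∃ u : Fin N, (u : ℕ) < (v0 : ℕ) + 1 ∧ w u = false := by
    have : (Finset.univ.filter
        (fun v : Fin N => (v : ℕ) < (v0 : ℕ) + 1 ∧ w v = false)).Nonempty := by
      rw [← Finset.card_pos]
      exact h1.trans (hbal _)
    obtain ⟨u, hu⟩ := this
    simp only [Finset.mem_filter, Finset.mem_univ, true_and] at hu
    exact ⟨u, hu⟩
  obtain ⟨u, hu1, hu2⟩ := h3
  have huv : (u : ℕ) < (v0 : ℕ) := by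
    rcases Nat.lt_or_ge (u : ℕ) (v0 : ℕ) with h | h
    · exact h
    · have : (u : ℕ) = (v0 : ℕ) := by omega
      have : u = v0 := Fin.ext this
      rw [this, hv0true] at hu2
      exact absurd hu2 (by simp)
  -- v0 is a descent
  have hv0ge : 1 ≤ (v0 : ℕ) := by omega
  have : (v0 : ℕ) ∈ desW w := by
    simp only [desW, Finset.mem_filter, Finset.mem_range]
    refine ⟨v0.isLt, ⟨(v0 : ℕ) - 1, by omega⟩, v0, by simp; omega, rfl, ?_, hv0true⟩
    apply hmin
    simp only [Fin.lt_def]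
    omega
  rw [Finset.card_eq_zero] at hdc
  rw [hdc] at this
  exact absurd this (Finset.notMem_empty _)

def snocEquiv (M : ℕ) : ((Fin M → Bool) × Bool) ≃ (Fin (M + 1) → Bool) where
  toFun p := Fin.snoc p.1 p.2
  invFun w := (Fin.init w, w (Fin.last M))
  left_inv p := by
    ext x
    · simp [Fin.init_snoc]
    · simp
  right_inv w := by
    simp [Fin.snoc_init_self]

lemma sum_snoc (M : ℕ) (P : (Fin (M + 1) → Bool) → Prop) [DecidablePred P]
    (f : (Fin (M + 1) → Bool) → Polynomial ℤ) :
    ∑ w ∈ Finset.univ.filter P, f w =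
      (∑ u ∈ Finset.univ.filter (fun u : Fin M → Bool => P (Fin.snoc u false)),
        f (Fin.snoc u false)) +
      (∑ u ∈ Finset.univ.filter (fun u : Fin M → Bool => P (Fin.snoc u true)),
        f (Fin.snoc u true)) := by
  rw [Finset.sum_filter, Finset.sum_filter, Finset.sum_filter]
  rw [← Equiv.sum_comp (snocEquiv M) (fun w => if P w then f w else 0)]
  rw [Fintype.sum_prod_type]
  have hb : ∀ u : Fin M → Bool,
      (∑ c : Bool, if P ((snocEquiv M) (u, c)) then f ((snocEquiv M) (u, c)) else 0)
        = (if P (Fin.snoc u false) then f (Fin.snoc u false) else 0)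
          + (if P (Fin.snoc u true) then f (Fin.snoc u true) else 0) := by
    intro u
    rw [Fintype.sum_bool]
    simp only [snocEquiv, Equiv.coe_fn_mk]
    exact add_comm _ _
  rw [Finset.sum_congr rfl (fun u _ => hb u), Finset.sum_add_distrib]

lemma WP_eq_filter (N b i : ℕ) :
    WP N b i = ∑ w ∈ Finset.univ.filter
        (fun w : Fin N → Bool => w ∈ WSet N b ∧ (desW w).card = i),
      X ^ ((desW w).sum id) := by
  unfold WP
  apply Finset.sum_congr
  · ext w
    simp [Finset.mem_filter]
  · intros
    rfl

lemma stepA (K b : ℕ) (Q : Finset ℕ → Prop) [∀ D, Decidable (Q D)] :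
    (∑ u ∈ Finset.univ.filter (fun u : Fin K → Bool =>
        Fin.snoc u false ∈ WSet (K + 1) b ∧ Q (desW (Fin.snoc u false))),
      X ^ ((desW (Fin.snoc u false)).sum id) : Polynomial ℤ)
    = ∑ w ∈ Finset.univ.filter (fun w : Fin K → Bool => w ∈ WSet K b ∧ Q (desW w)),
      X ^ ((desW w).sum id) := by
  apply Finset.sum_congr
  · apply Finset.filter_congr
    intro u _
    rw [mem_WSet_snoc_false, desW_snoc_false]
  · intro u _
    rw [desW_snoc_false]

lemma lastFalse (K b i : ℕ) :
    (∑ u ∈ Finset.univ.filter (fun u : Fin (K + 1) → Bool =>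
        u ∈ WSet (K + 1) b ∧ (desW u).card = i ∧ u (Fin.last K) = false),
      X ^ ((desW u).sum id) : Polynomial ℤ) = WP K b i := by
  rw [sum_snoc K (fun u => u ∈ WSet (K + 1) b ∧ (desW u).card = i ∧ u (Fin.last K) = false)
    (fun u => X ^ ((desW u).sum id))]
  have h0 : (Finset.univ.filter (fun u : Fin K → Bool =>
      Fin.snoc u true ∈ WSet (K + 1) b ∧ (desW (Fin.snoc u true)).card = i ∧
        (Fin.snoc u true : Fin (K + 1) → Bool) (Fin.last K) = false)) = ∅ := by
    apply Finset.eq_empty_of_forall_notMem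
    intro u hu
    simp only [Finset.mem_filter, Fin.snoc_last] at hu
    exact absurd hu.2.2.2 (by simp)
  rw [h0, Finset.sum_empty, add_zero]
  rw [WP_eq_filter]
  apply Finset.sum_congr
  · apply Finset.filter_congr
    intro u _
    rw [mem_WSet_snoc_false, desW_snoc_false, Fin.snoc_last]
    simp
  · intro u _
    rw [desW_snoc_false]

set_option maxHeartbeats 2000000 in
/-- the key recursion. -/
lemma WP_rec (M c j : ℕ) (h : 2 * (c + 1) ≤ M + 2) :
    WP (M + 2) (c + 1) (j + 1) =
      WP (M + 1) (c + 1) (j + 1) + WP (M + 1) c (j + 1) - WP M c (j + 1)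
        + X ^ (M + 1) * WP M c j := by
  rw [WP_eq_filter (M + 2) (c + 1) (j + 1)]
  rw [show (M + 2) = (M + 1) + 1 by omega]
  rw [sum_snoc (M + 1) (fun w => w ∈ WSet (M + 1 + 1) (c + 1) ∧ (desW w).card = j + 1)
    (fun w => X ^ ((desW w).sum id))]
  -- first piece: last letter false
  have hA : (∑ u ∈ Finset.univ.filter (fun u : Fin (M + 1) → Bool =>
      Fin.snoc u false ∈ WSet (M + 1 + 1) (c + 1) ∧ (desW (Fin.snoc u false)).card = j + 1),
      X ^ ((desW (Fin.snoc u false)).sum id) : Polynomial ℤ) = WP (M + 1) (c + 1) (j + 1) := by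
    rw [stepA (M + 1) (c + 1) (fun D => D.card = j + 1), WP_eq_filter]
  rw [hA]
  -- second piece: last letter true
  have hmem : ∀ u : Fin (M + 1) → Bool,
      (Fin.snoc u true ∈ WSet (M + 1 + 1) (c + 1)) ↔ u ∈ WSet (M + 1) c := by
    intro u
    rw [mem_WSet_snoc_true]
    constructor
    · exact fun hu => hu.1
    · exact fun hu => ⟨hu, by omega⟩
  have hsplit : (∑ u ∈ Finset.univ.filter (fun u : Fin (M + 1) → Bool =>
      Fin.snoc u true ∈ WSet (M + 1 + 1) (c + 1) ∧ (desW (Fin.snoc u true)).card = j + 1),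
      X ^ ((desW (Fin.snoc u true)).sum id) : Polynomial ℤ)
      = X ^ (M + 1) * WP M c j + (WP (M + 1) c (j + 1) - WP M c (j + 1)) := by
    -- split according to the last letter of `u`
    rw [← Finset.sum_filter_add_sum_filter_not _ (fun u : Fin (M + 1) → Bool =>
      u (Fin.last M) = false)]
    rw [Finset.filter_filter, Finset.filter_filter]
    have hF : (∑ u ∈ Finset.univ.filter (fun u : Fin (M + 1) → Bool =>
        (Fin.snoc u true ∈ WSet (M + 1 + 1) (c + 1) ∧ (desW (Fin.snoc u true)).card = j + 1)
          ∧ u (Fin.last M) = false),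
        X ^ ((desW (Fin.snoc u true)).sum id) : Polynomial ℤ)
        = X ^ (M + 1) * WP M c j := by
      have hcong : (Finset.univ.filter (fun u : Fin (M + 1) → Bool =>
          (Fin.snoc u true ∈ WSet (M + 1 + 1) (c + 1) ∧ (desW (Fin.snoc u true)).card = j + 1)
            ∧ u (Fin.last M) = false))
          = (Finset.univ.filter (fun u : Fin (M + 1) → Bool =>
            u ∈ WSet (M + 1) c ∧ (desW u).card = j ∧ u (Fin.last M) = false)) := by
        apply Finset.filter_congr
        intro u _
        simp only [hmem u]
        constructor
        · rintro ⟨⟨h1, h2⟩, h3⟩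
          rw [desW_snoc_true, if_pos h3] at h2
          rw [Finset.card_insert_of_notMem (fun hc => by
            have := desW_lt u hc
            omega)] at h2
          exact ⟨h1, by omega, h3⟩
        · rintro ⟨h1, h2, h3⟩
          refine ⟨⟨h1, ?_⟩, h3⟩
          rw [desW_snoc_true, if_pos h3, Finset.card_insert_of_notMem (fun hc => by
            have := desW_lt u hc
            omega)]
          omega
      rw [hcong]
      have hval : ∀ u ∈ Finset.univ.filter (fun u : Fin (M + 1) → Bool =>
          u ∈ WSet (M + 1) c ∧ (desW u).card = j ∧ u (Fin.last M) = false),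
          (X ^ ((desW (Fin.snoc u true)).sum id) : Polynomial ℤ)
            = X ^ (M + 1) * X ^ ((desW u).sum id) := by
        intro u hu
        simp only [Finset.mem_filter] at hu
        rw [desW_snoc_true, if_pos hu.2.2.2, Finset.sum_insert (fun hc => by
          have := desW_lt u hc
          omega)]
        rw [← pow_add]
        simp [id]
      rw [Finset.sum_congr rfl hval, ← Finset.mul_sum]
      congr 1
      have := lastFalse M c j
      rw [← this]
    have hT : (∑ u ∈ Finset.univ.filter (fun u : Fin (M + 1) → Bool =>
        (Fin.snoc u true ∈ WSet (M + 1 + 1) (c + 1) ∧ (desW (Fin.snoc u true)).card = j + 1)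
          ∧ ¬ u (Fin.last M) = false),
        X ^ ((desW (Fin.snoc u true)).sum id) : Polynomial ℤ)
        = WP (M + 1) c (j + 1) - WP M c (j + 1) := by
      have hcong : (Finset.univ.filter (fun u : Fin (M + 1) → Bool =>
          (Fin.snoc u true ∈ WSet (M + 1 + 1) (c + 1) ∧ (desW (Fin.snoc u true)).card = j + 1)
            ∧ ¬ u (Fin.last M) = false))
          = (Finset.univ.filter (fun u : Fin (M + 1) → Bool =>
            u ∈ WSet (M + 1) c ∧ (desW u).card = j + 1 ∧ ¬ u (Fin.last M) = false)) := by
        apply Finset.filter_congr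
        intro u _
        simp only [hmem u]
        constructor
        · rintro ⟨⟨h1, h2⟩, h3⟩
          rw [desW_snoc_true, if_neg h3] at h2
          exact ⟨h1, h2, h3⟩
        · rintro ⟨h1, h2, h3⟩
          refine ⟨⟨h1, ?_⟩, h3⟩
          rw [desW_snoc_true, if_neg h3]
          exact h2
      rw [hcong]
      have hval : ∀ u ∈ Finset.univ.filter (fun u : Fin (M + 1) → Bool =>
          u ∈ WSet (M + 1) c ∧ (desW u).card = j + 1 ∧ ¬ u (Fin.last M) = false),
          (X ^ ((desW (Fin.snoc u true)).sum id) : Polynomial ℤ)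
            = X ^ ((desW u).sum id) := by
        intro u hu
        simp only [Finset.mem_filter] at hu
        rw [desW_snoc_true, if_neg hu.2.2.2]
      rw [Finset.sum_congr rfl hval]
      rw [eq_sub_iff_add_eq, ← lastFalse M c (j + 1), WP_eq_filter (M + 1) c (j + 1)]
      rw [← Finset.sum_filter_add_sum_filter_not
        (Finset.univ.filter (fun u : Fin (M + 1) → Bool =>
          u ∈ WSet (M + 1) c ∧ (desW u).card = j + 1))
        (fun u : Fin (M + 1) → Bool => u (Fin.last M) = false)]
      rw [Finset.filter_filter, Finset.filter_filter]
      rw [add_comm]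
      congr 1
      · apply Finset.sum_congr
        · apply Finset.filter_congr
          intro u _
          tauto
        · intros
          rfl
      · apply Finset.sum_congr
        · apply Finset.filter_congr
          intro u _
          tauto
        · intros
          rfl
    rw [hF, hT]
  rw [hsplit]
  ring

/-! #### the q-binomial identity -/

lemma qBinom_zero_of_lt {M N : ℤ} (h : M < N) : qBinom M N = 0 :=
  if_neg (by omega)

lemma Rnat_eq (a b i : ℕ) (hb : 1 ≤ b) :
    Rnat a b i = X ^ (i ^ 2) *
      (qBinomAux a i * qBinomAux b i - qBinomAux (a + 1) i * qBinomAux (b - 1) i) := by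
  unfold Rnat
  rw [show ((a : ℤ) + 1) = ((a + 1 : ℕ) : ℤ) by push_cast; ring,
    show ((b : ℤ) - 1) = ((b - 1 : ℕ) : ℤ) by omega,
    qBinom_natCast, qBinom_natCast, qBinom_natCast, qBinom_natCast]

lemma Rnat_zero_of_lt {a b i : ℕ} (h : b < i) : Rnat a b i = 0 := by
  unfold Rnat
  rw [qBinom_zero_of_lt (show (b : ℤ) < i by omega),
    qBinom_zero_of_lt (show (b : ℤ) - 1 < i by omega)]
  ring

lemma Rnat_diag (a m : ℕ) : Rnat a m m = X ^ (m ^ 2) * qBinomAux a m := by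
  unfold Rnat
  rw [qBinom_natCast, qBinom_natCast, qAux_self,
    qBinom_zero_of_lt (show (m : ℤ) - 1 < m by omega)]
  ring

lemma keyC (j d e : ℕ) :
    X ^ ((j + 1) ^ 2) * (qBinomAux (j + d + 1) (j + 1) * qBinomAux (j + e + 2) (j + 1)
        - qBinomAux (j + d + 2) (j + 1) * qBinomAux (j + e + 1) (j + 1)) =
      X ^ ((j + 1) ^ 2) * (qBinomAux (j + d) (j + 1) * qBinomAux (j + e + 2) (j + 1)
        - qBinomAux (j + d + 1) (j + 1) * qBinomAux (j + e + 1) (j + 1))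
      + X ^ ((j + 1) ^ 2) * (qBinomAux (j + d + 1) (j + 1) * qBinomAux (j + e + 1) (j + 1)
        - qBinomAux (j + d + 2) (j + 1) * qBinomAux (j + e) (j + 1))
      - X ^ ((j + 1) ^ 2) * (qBinomAux (j + d) (j + 1) * qBinomAux (j + e + 1) (j + 1)
        - qBinomAux (j + d + 1) (j + 1) * qBinomAux (j + e) (j + 1))
      + X ^ (2 * j + d + e + 2) * (X ^ (j ^ 2) *
          (qBinomAux (j + d) j * qBinomAux (j + e + 1) j
            - qBinomAux (j + d + 1) j * qBinomAux (j + e) j)) := by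
  have p2 : qBinomAux (j + d + 2) (j + 1) =
      qBinomAux (j + d + 1) (j + 1) + X ^ (d + 1) * qBinomAux (j + d + 1) j := by
    rw [show j + d + 2 = (j + d + 1) + 1 by omega]
    exact pascal _ _ _ (by omega)
  have p4 : qBinomAux (j + e + 2) (j + 1) =
      qBinomAux (j + e + 1) (j + 1) + X ^ (e + 1) * qBinomAux (j + e + 1) j := by
    rw [show j + e + 2 = (j + e + 1) + 1 by omega]
    exact pascal _ _ _ (by omega)
  have p1 : qBinomAux (j + d + 1) (j + 1) =
      qBinomAux (j + d) (j + 1) + X ^ d * qBinomAux (j + d) j :=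
    pascal _ _ _ (by omega)
  have p3 : qBinomAux (j + e + 1) (j + 1) =
      qBinomAux (j + e) (j + 1) + X ^ e * qBinomAux (j + e) j :=
    pascal _ _ _ (by omega)
  rw [p2, p4, p1, p3]
  ring

lemma Rnat_key (a b i : ℕ) (hba : b ≤ a) (hb : 1 ≤ b) (hi : 1 ≤ i) :
    Rnat a b i =
      Rnat (a - 1) b i + Rnat a (b - 1) i - Rnat (a - 1) (b - 1) i
        + X ^ (a + b - 1) * Rnat (a - 1) (b - 1) (i - 1) := by
  rcases lt_trichotomy b i with hc | hc | hc
  · -- case b < i : everything vanishes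
    rw [Rnat_zero_of_lt hc, Rnat_zero_of_lt hc,
      Rnat_zero_of_lt (show b - 1 < i by omega), Rnat_zero_of_lt (show b - 1 < i by omega),
      Rnat_zero_of_lt (show b - 1 < i - 1 by omega)]
    ring
  · -- case b = i
    subst hc
    obtain ⟨c, rfl⟩ : ∃ c, b = c + 1 := ⟨b - 1, by omega⟩
    obtain ⟨d, rfl⟩ : ∃ d, a = c + 1 + d := ⟨a - (c + 1), by omega⟩
    rw [Rnat_zero_of_lt (show (c + 1) - 1 < c + 1 by omega),
      Rnat_zero_of_lt (show (c + 1) - 1 < c + 1 by omega)]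
    simp only [show c + 1 + d - 1 = c + d by omega, show (c + 1) - 1 = c by omega,
      show c + 1 + d + (c + 1) - 1 = 2 * c + d + 1 by omega]
    rw [Rnat_diag, Rnat_diag, Rnat_diag]
    rw [show c + 1 + d = (c + d) + 1 by omega, pascal (c + d) c d (by omega)]
    ring
  · -- main case i < b
    obtain ⟨j, rfl⟩ : ∃ j, i = j + 1 := ⟨i - 1, by omega⟩
    obtain ⟨e, rfl⟩ : ∃ e, b = j + e + 2 := ⟨b - j - 2, by omega⟩
    obtain ⟨d, rfl⟩ : ∃ d, a = j + d + 1 := ⟨a - j - 1, by omega⟩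
    rw [Rnat_eq _ _ _ (by omega), Rnat_eq _ _ _ (by omega), Rnat_eq _ _ _ (by omega),
      Rnat_eq _ _ _ (by omega), Rnat_eq _ _ _ (by omega)]
    simp only [show j + d + 1 - 1 = j + d by omega, show j + e + 2 - 1 = j + e + 1 by omega,
      show j + e + 1 - 1 = j + e by omega, show j + 1 - 1 = j by omega,
      show j + d + 1 + 1 = j + d + 2 by omega, show j + e + 1 + 1 = j + e + 2 by omega,
      show j + d + 1 + (j + e + 2) - 1 = 2 * j + d + e + 2 by omega,
      show j + d + 1 + 1 = j + d + 2 by omega]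
    exact keyC j d e

lemma Rnat_sym (b i : ℕ) (hb : 1 ≤ b) : Rnat (b - 1) b i = 0 := by
  unfold Rnat
  rw [show (((b - 1 : ℕ)) : ℤ) = (b : ℤ) - 1 by omega,
    show ((b : ℤ) - 1) + 1 = (b : ℤ) by ring]
  ring

/-! #### the main induction -/

lemma qBinom_zero_right {M : ℤ} (h : 0 ≤ M) : qBinom M 0 = 1 := by
  unfold qBinom
  rw [if_pos ⟨le_refl 0, h⟩]
  exact qAux_zero_right _

lemma WP_eq_Rnat : ∀ s a b i : ℕ, a + b = s → b ≤ a → WP (a + b) b i = Rnat a b i := by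
  intro s
  induction s using Nat.strong_induction_on with
  | _ s ih =>
  intro a b i hs hba
  rcases Nat.eq_zero_or_pos b with hb | hb
  · subst hb
    rw [WP_b_zero]
    unfold Rnat
    rcases Nat.eq_zero_or_pos i with hi | hi
    · subst hi
      rw [if_pos rfl]
      push_cast
      rw [qBinom_zero_right (by positivity), qBinom_zero_right (by positivity),
        qBinom_zero_right (by positivity),
        qBinom_zero_of_lt (show (-1 : ℤ) < (0 : ℤ) by norm_num)]
      simp
    · rw [if_neg (by omega)]
      push_cast
      rw [qBinom_zero_of_lt (show (0 : ℤ) < (i : ℤ) by omega),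
        qBinom_zero_of_lt (show (-1 : ℤ) < (i : ℤ) by omega)]
      ring
  · rcases Nat.eq_zero_or_pos i with hi | hi
    · subst hi
      rw [WP_i_zero hb]
      unfold Rnat
      push_cast
      rw [qBinom_zero_right (by positivity), qBinom_zero_right (by positivity),
        qBinom_zero_right (by positivity), qBinom_zero_right (show (0 : ℤ) ≤ (b : ℤ) - 1 by omega)]
      ring
    · obtain ⟨j, rfl⟩ : ∃ j, i = j + 1 := ⟨i - 1, by omega⟩
      obtain ⟨c, rfl⟩ : ∃ c, b = c + 1 := ⟨b - 1, by omega⟩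
      obtain ⟨d, rfl⟩ : ∃ d, a = c + 1 + d := ⟨a - (c + 1), by omega⟩
      have hrec := WP_rec (2 * c + d) c j (by omega)
      rw [show c + 1 + d + (c + 1) = 2 * c + d + 2 by omega, hrec]
      have h2 : WP (2 * c + d + 1) c (j + 1) = Rnat (c + 1 + d) c (j + 1) := by
        rw [show 2 * c + d + 1 = (c + 1 + d) + c by omega]
        exact ih _ (by omega) _ _ _ rfl (by omega)
      have h3 : WP (2 * c + d) c (j + 1) = Rnat (c + d) c (j + 1) := by
        rw [show 2 * c + d = (c + d) + c by omega]
        exact ih _ (by omega) _ _ _ rfl (by omega)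
      have h4 : WP (2 * c + d) c j = Rnat (c + d) c j := by
        rw [show 2 * c + d = (c + d) + c by omega]
        exact ih _ (by omega) _ _ _ rfl (by omega)
      have h1 : WP (2 * c + d + 1) (c + 1) (j + 1) = Rnat (c + d) (c + 1) (j + 1) := by
        rcases Nat.eq_zero_or_pos d with hd | hd
        · subst hd
          rw [WP_eq_zero (by omega)]
          have := Rnat_sym (c + 1) (j + 1) (by omega)
          rw [show (c + 1) - 1 = c by omega] at this
          rw [show c + 0 = c by omega, this]
        · rw [show 2 * c + d + 1 = (c + d) + (c + 1) by omega]
          exact ih _ (by omega) _ _ _ rfl (by omega)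
      rw [h1, h2, h3, h4]
      have hkey := Rnat_key (c + 1 + d) (c + 1) (j + 1) (by omega) (by omega) (by omega)
      simp only [show c + 1 + d - 1 = c + d by omega, show (c + 1) - 1 = c by omega,
        show j + 1 - 1 = j by omega,
        show c + 1 + d + (c + 1) - 1 = 2 * c + d + 1 by omega] at hkey
      rw [hkey]

/-! #### the bijection with tableaux -/

lemma mem_skewCells {a b : ℕ} (hba : b ≤ a) (p : ℕ × ℕ) :
    p ∈ skewCells [a, b] [] ↔ (p.1 = 0 ∧ p.2 < a) ∨ (p.1 = 1 ∧ p.2 < b) := by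
  obtain ⟨r, c⟩ := p
  simp only [skewCells, Finset.mem_filter, Finset.mem_product, Finset.mem_range,
    List.length_cons, List.length_nil, List.foldr]
  constructor
  · rintro ⟨⟨hr, hc⟩, h0, hlt⟩
    interval_cases r
    · left
      refine ⟨rfl, ?_⟩
      simpa using hlt
    · right
      refine ⟨rfl, ?_⟩
      simpa using hlt
  · rintro (⟨rfl, hc⟩ | ⟨rfl, hc⟩)
    · refine ⟨⟨by norm_num, ?_⟩, by simp, by simpa⟩
      simp only [max_def]
      split_ifs <;> omega
    · refine ⟨⟨by norm_num, ?_⟩, by simp, by simpa⟩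
      simp only [max_def]
      split_ifs <;> omega

lemma skew_eq_union {a b : ℕ} (hba : b ≤ a) :
    skewCells [a, b] [] = ((Finset.range a).image (fun c => ((0 : ℕ), c))) ∪
      ((Finset.range b).image (fun c => ((1 : ℕ), c))) := by
  ext p
  rw [mem_skewCells hba]
  simp only [Finset.mem_union, Finset.mem_image, Finset.mem_range]
  constructor
  · rintro (⟨h0, hc⟩ | ⟨h1, hc⟩)
    · exact Or.inl ⟨p.2, hc, by rw [← h0]⟩
    · exact Or.inr ⟨p.2, hc, by rw [← h1]⟩
  · rintro (⟨c, hc, rfl⟩ | ⟨c, hc, rfl⟩)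
    · exact Or.inl ⟨rfl, hc⟩
    · exact Or.inr ⟨rfl, hc⟩

lemma card_skewCells (a b : ℕ) (hba : b ≤ a) : (skewCells [a, b] []).card = a + b := by
  rw [skew_eq_union hba, Finset.card_union_of_disjoint, Finset.card_image_of_injective,
    Finset.card_image_of_injective, Finset.card_range, Finset.card_range]
  · intro x y hxy
    simpa using hxy
  · intro x y hxy
    simpa using hxy
  · rw [Finset.disjoint_left]
    rintro p hp hq
    simp only [Finset.mem_image, Finset.mem_range] at hp hq
    obtain ⟨c, _, rfl⟩ := hp
    obtain ⟨c', _, h⟩ := hq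
    simpa using congrArg Prod.fst h

lemma skew_filter_card {a b : ℕ} (hba : b ≤ a) :
    ((skewCells [a, b] []).filter (fun x => x.1 = 1)).card = b := by
  have : (skewCells [a, b] []).filter (fun x => x.1 = 1)
      = (Finset.range b).image (fun c => ((1 : ℕ), c)) := by
    ext p
    simp only [Finset.mem_filter, mem_skewCells hba, Finset.mem_image, Finset.mem_range]
    constructor
    · rintro ⟨(⟨h0, _⟩ | ⟨h1, hc⟩), hp1⟩
      · omega
      · exact ⟨p.2, hc, by rw [← h1]⟩
    · rintro ⟨c, hc, rfl⟩
      exact ⟨Or.inr ⟨rfl, hc⟩, rfl⟩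
  rw [this, Finset.card_image_of_injective, Finset.card_range]
  intro x y hxy
  simpa using hxy

/-- the word read off a tableau: `true` iff the entry sits in row 1. -/
def wOf {a b : ℕ}
    (pos : Fin (skewCells [a, b] []).card → ↥(skewCells [a, b] [])) :
    Fin (skewCells [a, b] []).card → Bool :=
  fun v => decide (((pos v : ℕ × ℕ)).1 = 1)

/-- the tableau associated to a word. -/
def posOf {a b : ℕ} (w : Fin (skewCells [a, b] []).card → Bool) :
    Fin (skewCells [a, b] []).card → ↥(skewCells [a, b] []) := fun v =>
  if h : (if w v then ((1 : ℕ), cntB w (v : ℕ) true)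
      else ((0 : ℕ), cntB w (v : ℕ) false)) ∈ skewCells [a, b] []
  then ⟨_, h⟩
  else ⟨(Finset.card_pos.mp v.pos).choose, (Finset.card_pos.mp v.pos).choose_spec⟩

lemma wOf_row {a b : ℕ} (pos : Fin (skewCells [a, b] []).card → ↥(skewCells [a, b] []))
    (hba : b ≤ a) (v : Fin (skewCells [a, b] []).card) :
    (wOf pos v = true ↔ ((pos v : ℕ × ℕ)).1 = 1) ∧
      (wOf pos v = false ↔ ((pos v : ℕ × ℕ)).1 = 0) := by
  have hmem := (mem_skewCells hba _).mp (pos v).2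
  unfold wOf
  rcases hmem with ⟨h0, _⟩ | ⟨h1, _⟩
  · simp [h0]
  · simp [h1]

/-- descent sets correspond. -/
lemma desSet_eq_desW {a b : ℕ} (hba : b ≤ a)
    (pos : Fin (skewCells [a, b] []).card → ↥(skewCells [a, b] [])) :
    desSet [a, b] [] pos = desW (wOf pos) := by
  ext v
  simp only [desSet, desW, Finset.mem_filter, Finset.mem_range]
  constructor
  · rintro ⟨hv, α, β, hα, hβ, hlt⟩
    refine ⟨hv, α, β, hα, hβ, ?_, ?_⟩
    · rw [(wOf_row pos hba α).2]
      have h1 := (mem_skewCells hba _).mp (pos α).2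
      have h2 := (mem_skewCells hba _).mp (pos β).2
      omega
    · rw [(wOf_row pos hba β).1]
      have h1 := (mem_skewCells hba _).mp (pos α).2
      have h2 := (mem_skewCells hba _).mp (pos β).2
      omega
  · rintro ⟨hv, α, β, hα, hβ, hwα, hwβ⟩
    rw [(wOf_row pos hba α).2] at hwα
    rw [(wOf_row pos hba β).1] at hwβ
    exact ⟨hv, α, β, hα, hβ, by omega⟩

section Forward

variable {a b : ℕ}

lemma pos_surj (pos : Fin (skewCells [a, b] []).card → ↥(skewCells [a, b] []))
    (hpos : IsSYT [a, b] [] pos) :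
    ∀ x : ↥(skewCells [a, b] []), ∃ v, pos v = x := by
  have hbij : Function.Bijective pos := by
    rw [Fintype.bijective_iff_injective_and_card]
    exact ⟨hpos.1, by simp [Fintype.card_coe]⟩
  exact fun x => hbij.2 x

lemma cnt_true_eq (hba : b ≤ a)
    (pos : Fin (skewCells [a, b] []).card → ↥(skewCells [a, b] []))
    (hpos : IsSYT [a, b] [] pos) :
    cntB (wOf pos) (skewCells [a, b] []).card true = b := by
  unfold cntB
  refine Eq.trans ?_ (skew_filter_card hba)
  apply Finset.card_bij (fun v _ => (pos v : ℕ × ℕ))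
  · intro v hv
    simp only [Finset.mem_filter, Finset.mem_univ, true_and] at hv ⊢
    exact ⟨(pos v).2, (wOf_row pos hba v).1.mp hv.2⟩
  · intro v₁ h₁ v₂ h₂ heq
    exact hpos.1 (Subtype.ext heq)
  · intro x hx
    simp only [Finset.mem_filter] at hx
    obtain ⟨v, hv⟩ := pos_surj pos hpos ⟨x, hx.1⟩
    refine ⟨v, ?_, by rw [hv]⟩
    simp only [Finset.mem_filter, Finset.mem_univ, true_and]
    refine ⟨v.isLt, (wOf_row pos hba v).1.mpr ?_⟩
    rw [hv]
    exact hx.2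

lemma ballot_of_SYT (hba : b ≤ a)
    (pos : Fin (skewCells [a, b] []).card → ↥(skewCells [a, b] []))
    (hpos : IsSYT [a, b] [] pos) (m : ℕ) :
    cntB (wOf pos) m true ≤ cntB (wOf pos) m false := by
  classical
  -- map each `true` index below `m` to the index of the cell directly above it
  set φ : Fin (skewCells [a, b] []).card → Fin (skewCells [a, b] []).card := fun v =>
    if h : ((0 : ℕ), ((pos v : ℕ × ℕ)).2) ∈ skewCells [a, b] []
    then Classical.choose (pos_surj pos hpos ⟨_, h⟩)
    else v with hφ
  have key : ∀ v : Fin (skewCells [a, b] []).card, wOf pos v = true →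
      (pos (φ v) : ℕ × ℕ) = ((0 : ℕ), ((pos v : ℕ × ℕ)).2) ∧ φ v < v := by
    intro v hv
    have hrow1 : ((pos v : ℕ × ℕ)).1 = 1 := (wOf_row pos hba v).1.mp hv
    have hcol : ((pos v : ℕ × ℕ)).2 < b := by
      rcases (mem_skewCells hba _).mp (pos v).2 with ⟨h1, h2⟩ | ⟨h1, h2⟩ <;> omega
    have hmem : ((0 : ℕ), ((pos v : ℕ × ℕ)).2) ∈ skewCells [a, b] [] := by
      rw [mem_skewCells hba]
      left
      exact ⟨rfl, by omega⟩
    have hspec := Classical.choose_spec (pos_surj pos hpos ⟨_, hmem⟩)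
    rw [hφ]
    simp only [dif_pos hmem]
    refine ⟨by rw [hspec], ?_⟩
    apply hpos.2.2
    · rw [hspec]
    · rw [hspec, hrow1]
      norm_num
  apply Finset.card_le_card_of_injOn φ
  · intro v hv
    simp only [Finset.mem_coe, Finset.mem_filter, Finset.mem_univ, true_and] at hv ⊢
    obtain ⟨hfix, hlt⟩ := key v hv.2
    refine ⟨?_, ?_⟩
    · have : ((φ v : ℕ)) < (v : ℕ) := hlt
      omega
    · rw [(wOf_row pos hba (φ v)).2, hfix]
  · intro v₁ h₁ v₂ h₂ heq
    simp only [Finset.coe_filter, Set.mem_setOf_eq] at h₁ h₂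
    obtain ⟨hfix₁, _⟩ := key v₁ h₁.2.2
    obtain ⟨hfix₂, _⟩ := key v₂ h₂.2.2
    have hcol : ((pos v₁ : ℕ × ℕ)).2 = ((pos v₂ : ℕ × ℕ)).2 := by
      have := hfix₁.symm.trans (heq ▸ hfix₂)
      simpa using this
    have hrow : ((pos v₁ : ℕ × ℕ)).1 = ((pos v₂ : ℕ × ℕ)).1 := by
      rw [(wOf_row pos hba v₁).1.mp h₁.2.2, (wOf_row pos hba v₂).1.mp h₂.2.2]
    apply hpos.1
    apply Subtype.ext
    exact Prod.ext hrow hcol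

lemma col_eq_cnt (hba : b ≤ a)
    (pos : Fin (skewCells [a, b] []).card → ↥(skewCells [a, b] []))
    (hpos : IsSYT [a, b] [] pos) (v : Fin (skewCells [a, b] []).card) :
    ((pos v : ℕ × ℕ)).2 = cntB (wOf pos) (v : ℕ) (wOf pos v) := by
  classical
  unfold cntB
  symm
  rw [show ((pos v : ℕ × ℕ)).2 = (Finset.range ((pos v : ℕ × ℕ)).2).card from
    (Finset.card_range _).symm]
  apply Finset.card_bij (fun u _ => ((pos u : ℕ × ℕ)).2)
  · intro u hu
    simp only [Finset.mem_filter, Finset.mem_univ, true_and] at hu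
    simp only [Finset.mem_range]
    have hrow : ((pos u : ℕ × ℕ)).1 = ((pos v : ℕ × ℕ)).1 := by
      have h1 := (mem_skewCells hba _).mp (pos u).2
      have h2 := (mem_skewCells hba _).mp (pos v).2
      have := hu.2
      unfold wOf at this
      rcases h1 with ⟨e1, _⟩ | ⟨e1, _⟩ <;> rcases h2 with ⟨e2, _⟩ | ⟨e2, _⟩ <;>
        simp [e1, e2] at this ⊢ <;> omega
    rcases lt_trichotomy ((pos u : ℕ × ℕ)).2 ((pos v : ℕ × ℕ)).2 with h | h | h
    · exact h
    · exfalso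
      have : u = v := hpos.1 (Subtype.ext (Prod.ext hrow h))
      subst this
      exact absurd hu.1 (by omega)
    · exfalso
      have : v < u := hpos.2.1 v u hrow.symm h
      have : (v : ℕ) < (u : ℕ) := this
      omega
  · intro u₁ h₁ u₂ h₂ heq
    simp only [Finset.mem_filter, Finset.mem_univ, true_and] at h₁ h₂
    have hrow : ∀ u : Fin (skewCells [a, b] []).card, wOf pos u = wOf pos v →
        ((pos u : ℕ × ℕ)).1 = ((pos v : ℕ × ℕ)).1 := by
      intro u hu
      have e1 := (mem_skewCells hba _).mp (pos u).2
      have e2 := (mem_skewCells hba _).mp (pos v).2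
      unfold wOf at hu
      rcases e1 with ⟨e1, _⟩ | ⟨e1, _⟩ <;> rcases e2 with ⟨e2, _⟩ | ⟨e2, _⟩ <;>
        simp [e1, e2] at hu ⊢ <;> omega
    apply hpos.1
    apply Subtype.ext
    exact Prod.ext ((hrow u₁ h₁.2).trans (hrow u₂ h₂.2).symm) heq
  · intro c hc
    simp only [Finset.mem_range] at hc
    have hmem : (((pos v : ℕ × ℕ)).1, c) ∈ skewCells [a, b] [] := by
      rw [mem_skewCells hba]
      have := (mem_skewCells hba _).mp (pos v).2
      rcases this with ⟨h1, h2⟩ | ⟨h1, h2⟩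
      · exact Or.inl ⟨h1, by omega⟩
      · exact Or.inr ⟨h1, by omega⟩
    obtain ⟨u, hu⟩ := pos_surj pos hpos ⟨_, hmem⟩
    have hrowu : ((pos u : ℕ × ℕ)).1 = ((pos v : ℕ × ℕ)).1 := by rw [hu]
    have hcolu : ((pos u : ℕ × ℕ)).2 = c := by rw [hu]
    have hultv : u < v := by
      apply hpos.2.1
      · exact hrowu
      · rw [hcolu]
        exact hc
    refine ⟨u, ?_, hcolu⟩
    simp only [Finset.mem_filter, Finset.mem_univ, true_and]
    refine ⟨hultv, ?_⟩
    unfold wOf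
    have e1 := (mem_skewCells hba _).mp (pos u).2
    have e2 := (mem_skewCells hba _).mp (pos v).2
    rcases e1 with ⟨e1, _⟩ | ⟨e1, _⟩ <;> rcases e2 with ⟨e2, _⟩ | ⟨e2, _⟩ <;>
      simp [e1, e2] <;> omega

lemma wOf_mem_WSet (hba : b ≤ a)
    (pos : Fin (skewCells [a, b] []).card → ↥(skewCells [a, b] []))
    (hpos : IsSYT [a, b] [] pos) :
    wOf pos ∈ WSet ((skewCells [a, b] []).card) b := by
  simp only [WSet, Finset.mem_filter, Finset.mem_univ, true_and]
  exact ⟨ballot_of_SYT hba pos hpos, cnt_true_eq hba pos hpos⟩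

lemma posOf_wOf (hba : b ≤ a)
    (pos : Fin (skewCells [a, b] []).card → ↥(skewCells [a, b] []))
    (hpos : IsSYT [a, b] [] pos) : posOf (wOf pos) = pos := by
  funext v
  unfold posOf
  have hcell : (if wOf pos v then ((1 : ℕ), cntB (wOf pos) (v : ℕ) true)
      else ((0 : ℕ), cntB (wOf pos) (v : ℕ) false)) = (pos v : ℕ × ℕ) := by
    have hcol := col_eq_cnt hba pos hpos v
    cases hw : wOf pos v
    · rw [if_neg (by simp)]
      have hrow := (wOf_row pos hba v).2.mp hw
      rw [hw] at hcol
      exact Prod.ext hrow.symm hcol.symm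
    · rw [if_pos rfl]
      have hrow := (wOf_row pos hba v).1.mp hw
      rw [hw] at hcol
      exact Prod.ext hrow.symm hcol.symm
  apply Subtype.ext
  rw [apply_dite Subtype.val, dif_pos (hcell ▸ (pos v).2)]
  exact hcell

end Forward

section Backward

variable {a b : ℕ}

lemma posOf_val (hba : b ≤ a) (w : Fin (skewCells [a, b] []).card → Bool)
    (hw : w ∈ WSet ((skewCells [a, b] []).card) b)
    (v : Fin (skewCells [a, b] []).card) :
    (posOf w v : ℕ × ℕ) = (if w v then ((1 : ℕ), cntB w (v : ℕ) true)
      else ((0 : ℕ), cntB w (v : ℕ) false)) := by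
  simp only [WSet, Finset.mem_filter, Finset.mem_univ, true_and] at hw
  have hN : (skewCells [a, b] []).card = a + b := card_skewCells a b hba
  have htot := cntB_total w
  have hmem : (if w v then ((1 : ℕ), cntB w (v : ℕ) true)
      else ((0 : ℕ), cntB w (v : ℕ) false)) ∈ skewCells [a, b] [] := by
    rw [mem_skewCells hba]
    cases hwv : w v
    · rw [if_neg (by simp)]
      left
      refine ⟨rfl, ?_⟩
      have := cntB_lt w v v.isLt false hwv
      omega
    · rw [if_pos rfl]
      right
      refine ⟨rfl, ?_⟩
      have := cntB_lt w v v.isLt true hwv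
      omega
  unfold posOf
  rw [apply_dite Subtype.val, dif_pos hmem]

lemma posOf_isSYT (hba : b ≤ a) (w : Fin (skewCells [a, b] []).card → Bool)
    (hw : w ∈ WSet ((skewCells [a, b] []).card) b) :
    IsSYT [a, b] [] (posOf w) := by
  have hval := posOf_val hba w hw
  have hballot : ∀ m, cntB w m true ≤ cntB w m false := by
    simp only [WSet, Finset.mem_filter, Finset.mem_univ, true_and] at hw
    exact hw.1
  have hrowval : ∀ v, ((posOf w v : ℕ × ℕ)).1 = if w v then 1 else 0 := by
    intro v
    rw [hval v]
    cases hwv : w v <;> simp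
  have hcolval : ∀ v, ((posOf w v : ℕ × ℕ)).2 = cntB w (v : ℕ) (w v) := by
    intro v
    rw [hval v]
    cases hwv : w v <;> simp
  have hwdet : ∀ u v : Fin (skewCells [a, b] []).card,
      ((posOf w u : ℕ × ℕ)).1 = ((posOf w v : ℕ × ℕ)).1 → w u = w v := by
    intro u v huv
    rw [hrowval, hrowval] at huv
    cases h1 : w u <;> cases h2 : w v <;> simp [h1, h2] at huv ⊢
  refine ⟨?_, ?_, ?_⟩
  · -- injectivity
    intro u v huv
    have h1 : ((posOf w u : ℕ × ℕ)).1 = ((posOf w v : ℕ × ℕ)).1 := by rw [huv]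
    have hww := hwdet u v h1
    have h2 : cntB w (u : ℕ) (w u) = cntB w (v : ℕ) (w v) := by
      rw [← hcolval, ← hcolval, huv]
    rcases lt_trichotomy (u : ℕ) (v : ℕ) with h | h | h
    · exfalso
      rw [hww] at h2
      have := cntB_lt w u h (w v) hww
      omega
    · exact Fin.ext h
    · exfalso
      rw [← hww] at h2
      have := cntB_lt w v h (w u) hww.symm
      omega
  · -- rows increase
    intro u v hrow hcol
    have hww := hwdet u v hrow
    rw [hcolval, hcolval] at hcol
    rw [Fin.lt_def]
    rcases lt_trichotomy (u : ℕ) (v : ℕ) with h | h | h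
    · exact h
    · exfalso
      have : u = v := Fin.ext h
      subst this
      omega
    · exfalso
      have hmono := cntB_mono w (show (v : ℕ) ≤ (u : ℕ) by omega) (w v)
      rw [hww] at hcol
      omega
  · -- columns increase
    intro u v hcol hrow
    rw [hrowval, hrowval] at hrow
    have hwu : w u = false := by
      cases h1 : w u <;> cases h2 : w v <;> simp [h1, h2] at hrow ⊢
    have hwv : w v = true := by
      cases h1 : w u <;> cases h2 : w v <;> simp [h1, h2] at hrow ⊢
    rw [hcolval, hcolval, hwu, hwv] at hcol
    rw [Fin.lt_def]
    rcases lt_trichotomy (u : ℕ) (v : ℕ) with h | h | h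
    · exact h
    · exfalso
      have : u = v := Fin.ext h
      subst this
      rw [hwu] at hwv
      exact absurd hwv (by simp)
    · exfalso
      -- v < u, ballot at v+1 gives contradiction
      have h1 : cntB w ((v : ℕ) + 1) true > cntB w (v : ℕ) true :=
        cntB_lt w v (by omega) true hwv
      have h2 : cntB w ((v : ℕ) + 1) false ≤ cntB w (u : ℕ) false :=
        cntB_mono w (by omega) false
      have h3 := hballot ((v : ℕ) + 1)
      omega

lemma wOf_posOf (hba : b ≤ a) (w : Fin (skewCells [a, b] []).card → Bool)
    (hw : w ∈ WSet ((skewCells [a, b] []).card) b) :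
    wOf (posOf w) = w := by
  funext v
  unfold wOf
  rw [posOf_val hba w hw v]
  cases hwv : w v <;> simp

end Backward

lemma fPoly_eq_WP (a b i : ℕ) (hba : b ≤ a) :
    fPoly [a, b] i = WP ((skewCells [a, b] []).card) b i := by
  classical
  unfold fPoly fSkew WP
  apply Finset.sum_nbij' (i := fun pos => wOf pos) (j := fun w => posOf w)
  · intro pos hpos
    simp only [Finset.mem_filter, SYTs, Finset.mem_univ, true_and] at hpos ⊢
    refine ⟨wOf_mem_WSet hba pos hpos.1, ?_⟩
    have := hpos.2
    unfold desStat at this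
    rw [← desSet_eq_desW hba pos]
    exact this
  · intro w hw
    simp only [Finset.mem_filter, SYTs, Finset.mem_univ, true_and] at hw ⊢
    refine ⟨posOf_isSYT hba w hw.1, ?_⟩
    unfold desStat
    rw [desSet_eq_desW hba, wOf_posOf hba w hw.1]
    exact hw.2
  · intro pos hpos
    simp only [Finset.mem_filter, SYTs, Finset.mem_univ, true_and] at hpos
    exact posOf_wOf hba pos hpos.1
  · intro w hw
    simp only [Finset.mem_filter] at hw
    exact wOf_posOf hba w hw.1
  · intro pos hpos
    unfold majStat
    rw [desSet_eq_desW hba]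

end Aux

/-- For integers `n, k, i` with `k ≥ 1`, `n ≥ 2k`, `i ≥ 1`,
`f_{(n-k,k),i}(q) = q^{i²} · ([n-k choose i]_q [k choose i]_q
  - [n-k+1 choose i]_q [k-1 choose i]_q)`. -/
theorem stmt1 (n k i : ℕ) (hk : 1 ≤ k) (hn : 2 * k ≤ n) (hi : 1 ≤ i) :
    fPoly [n - k, k] i =
      X ^ (i ^ 2) *
        (qBinom ((n : ℤ) - k) i * qBinom k i -
          qBinom ((n : ℤ) - k + 1) i * qBinom ((k : ℤ) - 1) i) := by
  have hba : k ≤ n - k := by omega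
  rw [fPoly_eq_WP (n - k) k i hba, card_skewCells _ _ hba,
    WP_eq_Rnat ((n - k) + k) (n - k) k i rfl hba]
  unfold Rnat
  rw [show (((n - k : ℕ)) : ℤ) = (n : ℤ) - k by omega]
end
end

section
/- Let n, k, i be integers with i ≥ 1, i ≤ k and 2k ≤ n. Then the polynomial f_{(n−k,k),i}(q) is symmetric with central degree ni/2; that is, q^{ni}·f_{(n−k,k),i}(1/q) = f_{(n−k,k),i}(q). In particular, for fixed n and i, all the polynomials f_{(n−k,k),i}(q) with i ≤ k ≤ n/2 have the same central degree ni/2. -/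
open Polynomial
open scoped Classical

noncomputable section

/-!
A two-row standard tableau of shape `(n - k, k)` is a ballot word of length `n` (letter `true`
for an entry of the second row), i.e. a lattice path `d` staying weakly above `0`, and its
descents are the peaks of `d`. Evacuation acts on paths by reflecting `d` below its suffix
minimum and reading the result backwards: the new path is `m ↦ g (n - m)` with
`g p = d p + d n - 2 min_{[p, n]} d`. This is an involution on ballot paths with the same
endpoint, and it moves a peak at `v` to a peak at `n - v`. So it preserves `des` and turns `maj`
into `n * des - maj`, pairing the tableaux counted by the coefficients of `q^s` and `q^(n i - s)`
in `f_{(n-k,k),i}`.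
-/

theorem coeff_sum_X_pow {α R : Type*} [Semiring R] (s : Finset α) (f : α → ℕ) (j : ℕ) :
    (∑ x ∈ s, (X : R[X]) ^ f x).coeff j = (s.filter fun x => j = f x).card := by
  simp only [finsetSum_coeff, coeff_X_pow, Finset.sum_boole]

theorem coeff_sum_X_pow_of_involution {α R : Type*} [Semiring R] {s : Finset α} {f : α → ℕ}
    {c : ℕ} (φ : ∀ x ∈ s, α) (hφ : ∀ x hx, φ x hx ∈ s)
    (hφφ : ∀ x hx, φ (φ x hx) (hφ x hx) = x)
    (hf : ∀ x hx, f (φ x hx) + f x = c) :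
    (∀ j ≤ c,
        (∑ x ∈ s, (X : R[X]) ^ f x).coeff j = (∑ x ∈ s, (X : R[X]) ^ f x).coeff (c - j)) ∧
      ∀ j, c < j → (∑ x ∈ s, (X : R[X]) ^ f x).coeff j = 0 := by
  simp only [coeff_sum_X_pow]
  refine ⟨fun j hj => congrArg _ ?_, fun j hj => ?_⟩
  · refine Finset.card_bij' (fun x hx => φ x (Finset.mem_filter.1 hx).1)
      (fun x hx => φ x (Finset.mem_filter.1 hx).1) ?_ ?_ (fun x _ => hφφ x _)
      (fun x _ => hφφ x _)
    all_goals
      intro x hx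
      rw [Finset.mem_filter] at hx ⊢
      have := hf x hx.1
      exact ⟨hφ x hx.1, by omega⟩
  · rw [Finset.card_eq_zero.2, Nat.cast_zero]
    refine Finset.filter_eq_empty_iff.2 fun x hx hjx => ?_
    have := hf x hx
    omega

namespace BinaryWord

def height (w : ℕ → Bool) : ℕ → ℤ
  | 0 => 0
  | m + 1 => height w m + if w m then -1 else 1

def IsBallot (w : ℕ → Bool) (N : ℕ) : Prop := ∀ m ≤ N, 0 ≤ height w m

-- `min p N` only keeps the interval nonempty; all uses have `p ≤ N`.
def suffixMin (w : ℕ → Bool) (N p : ℕ) : ℤ :=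
  (Finset.Icc (min p N) N).inf' (by simp) (height w)

def reflectedHeight (w : ℕ → Bool) (N p : ℕ) : ℤ :=
  height w p + height w N - 2 * suffixMin w N p

def evac (w : ℕ → Bool) (N j : ℕ) : Bool :=
  decide (reflectedHeight w N (N - j - 1) < reflectedHeight w N (N - j))

-- For the word of a tableau, letters `v - 1` and `v` give the rows of the entries `v` and `v + 1`.
def HasDescentAt (w : ℕ → Bool) (v : ℕ) : Prop := w (v - 1) = false ∧ w v = true

def count (w : ℕ → Bool) (b : Bool) (m : ℕ) : ℕ :=
  ((Finset.range m).filter (fun l => w l = b)).card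

variable {w w₁ w₂ : ℕ → Bool} {N p q m : ℕ}

theorem height_succ (w : ℕ → Bool) (m : ℕ) :
    height w (m + 1) = height w m + if w m then -1 else 1 := rfl

theorem height_succ_eq_or (w : ℕ → Bool) (m : ℕ) :
    height w (m + 1) = height w m + 1 ∨ height w (m + 1) = height w m - 1 := by
  rw [height_succ]
  cases w m <;> simp [sub_eq_add_neg]

theorem suffixMin_le_height (h : p ≤ N) : suffixMin w N p ≤ height w p :=
  Finset.inf'_le _ (by simp [h])

theorem suffixMin_le_height_end (w : ℕ → Bool) (N p : ℕ) : suffixMin w N p ≤ height w N :=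
  Finset.inf'_le _ (by simp)

theorem suffixMin_self (w : ℕ → Bool) (N : ℕ) : suffixMin w N N = height w N := by
  simp [suffixMin]

theorem IsBallot.suffixMin_nonneg (hw : IsBallot w N) (p : ℕ) : 0 ≤ suffixMin w N p :=
  Finset.le_inf' _ _ fun m hm => hw m (Finset.mem_Icc.1 hm).2

theorem IsBallot.suffixMin_zero (hw : IsBallot w N) : suffixMin w N 0 = 0 :=
  le_antisymm (suffixMin_le_height (Nat.zero_le N)) (hw.suffixMin_nonneg 0)

theorem suffixMin_mono (hpq : p ≤ q) (hq : q ≤ N) : suffixMin w N p ≤ suffixMin w N q :=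
  Finset.le_inf' _ _ fun m hm => Finset.inf'_le _ (by simp only [Finset.mem_Icc] at hm ⊢; omega)

theorem suffixMin_eq_min (h : p < N) :
    suffixMin w N p = min (height w p) (suffixMin w N (p + 1)) := by
  refine le_antisymm (le_min (suffixMin_le_height h.le) (suffixMin_mono p.le_succ h))
    (Finset.le_inf' _ _ fun m hm => ?_)
  rw [Finset.mem_Icc, min_eq_left h.le] at hm
  rcases hm.1.eq_or_lt with rfl | hpm
  · exact min_le_left _ _
  · exact (min_le_right _ _).trans (Finset.inf'_le _ (by simp only [Finset.mem_Icc]; omega))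

theorem reflectedHeight_succ_eq_or (h : p < N) :
    reflectedHeight w N (p + 1) = reflectedHeight w N p + 1 ∨
      reflectedHeight w N (p + 1) = reflectedHeight w N p - 1 := by
  have hmin := suffixMin_eq_min (w := w) h
  have hle : suffixMin w N (p + 1) ≤ height w (p + 1) := suffixMin_le_height h
  have hstep := height_succ_eq_or w p
  simp only [reflectedHeight, hmin, min_def]
  split <;> omega

theorem IsBallot.reflectedHeight_nonneg (hw : IsBallot w N) (hp : p ≤ N) :
    0 ≤ reflectedHeight w N p := by
  have := hw.suffixMin_nonneg p
  have := suffixMin_le_height (w := w) hp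
  have := suffixMin_le_height_end w N p
  simp only [reflectedHeight]
  omega

theorem height_evac (w : ℕ → Bool) (N : ℕ) :
    ∀ m ≤ N, height (evac w N) m = reflectedHeight w N (N - m) := by
  intro m hm
  induction m with
  | zero => simp [height, reflectedHeight, suffixMin_self]; ring
  | succ m ih =>
    rw [height_succ, ih (by omega)]
    have hstep := reflectedHeight_succ_eq_or (w := w) (N := N) (p := N - (m + 1)) (by omega)
    rw [show N - (m + 1) + 1 = N - m by omega] at hstep
    simp only [evac, show N - m - 1 = N - (m + 1) by omega]
    split_ifs with hlt <;> simp only [decide_eq_true_eq] at hlt <;> omega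

theorem isBallot_evac (hw : IsBallot w N) : IsBallot (evac w N) N := fun m hm => by
  rw [height_evac w N m hm]
  exact hw.reflectedHeight_nonneg (by omega)

theorem IsBallot.height_evac_end (hw : IsBallot w N) : height (evac w N) N = height w N := by
  simp [height_evac w N N le_rfl, reflectedHeight, hw.suffixMin_zero, height]

theorem IsBallot.exists_height_eq_suffixMin (hw : IsBallot w N) (hm : m ≤ N) :
    ∃ p ≤ m, height w p = suffixMin w N m ∧ suffixMin w N p = suffixMin w N m := by
  set P := fun p => height w p ≤ suffixMin w N m
  set p := Nat.findGreatest P m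
  have hpm : p ≤ m := Nat.findGreatest_le m
  have hPp : P p := Nat.findGreatest_spec (Nat.zero_le m) (hw.suffixMin_nonneg m)
  have habove : ∀ l, p < l → l ≤ m → suffixMin w N m < height w l := fun l hl hlm =>
    not_le.1 (Nat.findGreatest_is_greatest hl hlm)
  have hheight : height w p = suffixMin w N m := by
    rcases hpm.eq_or_lt with hpm | hpm
    · exact le_antisymm hPp (by rw [hpm]; exact suffixMin_le_height hm)
    · have := habove (p + 1) p.lt_succ_self hpm
      have := height_succ_eq_or w p
      omega
  refine ⟨p, hpm, hheight, le_antisymm (suffixMin_mono hpm hm)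
    (Finset.le_inf' _ _ fun l hl => ?_)⟩
  rw [Finset.mem_Icc, min_eq_left (hpm.trans hm)] at hl
  rcases le_or_gt l m with hlm | hlm
  · rcases hl.1.eq_or_lt with rfl | hpl
    · exact hheight.ge
    · exact (habove l hpl hlm).le
  · exact Finset.inf'_le _ (by simp only [Finset.mem_Icc]; omega)

theorem IsBallot.suffixMin_evac (hw : IsBallot w N) (hm : m ≤ N) :
    suffixMin (evac w N) N (N - m) = height w N - suffixMin w N m := by
  apply le_antisymm
  · obtain ⟨p, hpm, hheight, hmin⟩ := hw.exists_height_eq_suffixMin hm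
    calc suffixMin (evac w N) N (N - m) ≤ height (evac w N) (N - p) :=
          Finset.inf'_le _ (by simp only [Finset.mem_Icc]; omega)
      _ = height w N - suffixMin w N m := by
          rw [height_evac w N (N - p) (by omega), Nat.sub_sub_self (hpm.trans hm),
            reflectedHeight, hheight, hmin]
          ring
  · refine Finset.le_inf' _ _ fun l hl => ?_
    rw [Finset.mem_Icc] at hl
    rw [height_evac w N l hl.2]
    have := suffixMin_mono (w := w) (show N - l ≤ m by omega) hm
    have := suffixMin_le_height (w := w) (show N - l ≤ N by omega)
    simp only [reflectedHeight]
    omega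

theorem IsBallot.reflectedHeight_evac (hw : IsBallot w N) (hm : m ≤ N) :
    reflectedHeight (evac w N) N (N - m) = height w m := by
  rw [reflectedHeight, height_evac w N (N - m) (by omega), hw.height_evac_end,
    hw.suffixMin_evac hm, Nat.sub_sub_self hm, reflectedHeight]
  omega

theorem IsBallot.evac_evac (hw : IsBallot w N) {j : ℕ} (hj : j < N) :
    evac (evac w N) N j = w j := by
  rw [evac, show N - j - 1 = N - (j + 1) by omega, hw.reflectedHeight_evac hj,
    hw.reflectedHeight_evac hj.le, height_succ]
  cases w j <;> simp

theorem hasDescentAt_succ_iff (w : ℕ → Bool) (t : ℕ) :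
    HasDescentAt w (t + 1) ↔
      height w t < height w (t + 1) ∧ height w (t + 2) < height w (t + 1) := by
  rw [HasDescentAt, Nat.add_sub_cancel, height_succ w (t + 1), height_succ w t]
  cases w t <;> cases w (t + 1) <;> simp

theorem isPeak_iff_reflectedHeight (hu : p + 2 ≤ N) :
    (height w p < height w (p + 1) ∧ height w (p + 2) < height w (p + 1)) ↔
      (reflectedHeight w N p < reflectedHeight w N (p + 1) ∧
        reflectedHeight w N (p + 2) < reflectedHeight w N (p + 1)) := by
  have h₁ := suffixMin_eq_min (w := w) (show p < N by omega)
  have h₂ : suffixMin w N (p + 1) = min (height w (p + 1)) (suffixMin w N (p + 2)) :=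
    suffixMin_eq_min (by omega)
  have hle : suffixMin w N (p + 2) ≤ height w (p + 2) := suffixMin_le_height (by omega)
  have := height_succ_eq_or w p
  have : height w (p + 2) = height w (p + 1) + 1 ∨ height w (p + 2) = height w (p + 1) - 1 :=
    height_succ_eq_or w (p + 1)
  simp only [reflectedHeight, h₁, h₂, min_def]
  split_ifs <;> omega

theorem hasDescentAt_evac_iff {u : ℕ} (hu₁ : 1 ≤ u) (hu₂ : u + 1 ≤ N) :
    HasDescentAt (evac w N) u ↔ HasDescentAt w (N - u) := by
  obtain ⟨t, rfl⟩ : ∃ t, u = t + 1 := ⟨u - 1, by omega⟩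
  obtain ⟨s, hs⟩ : ∃ s, N - (t + 1) = s + 1 := ⟨N - t - 2, by omega⟩
  rw [hasDescentAt_succ_iff, height_evac w N t (by omega), height_evac w N (t + 1) (by omega),
    height_evac w N (t + 2) (by omega), hs, show N - t = s + 2 by omega,
    show N - (t + 2) = s by omega, hasDescentAt_succ_iff,
    isPeak_iff_reflectedHeight (N := N) (by omega)]
  tauto

theorem height_congr (h : ∀ l < N, w₁ l = w₂ l) :
    ∀ m ≤ N, height w₁ m = height w₂ m := by
  intro m hm
  induction m with
  | zero => rfl
  | succ m ih => rw [height_succ, height_succ, ih (by omega), h m (by omega)]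

theorem evac_congr (h : ∀ l < N, w₁ l = w₂ l) (j : ℕ) : evac w₁ N j = evac w₂ N j := by
  have hmin : ∀ p, suffixMin w₁ N p = suffixMin w₂ N p := fun p =>
    Finset.inf'_congr _ rfl fun x hx => height_congr h x (Finset.mem_Icc.1 hx).2
  unfold evac reflectedHeight
  rw [hmin, hmin, height_congr h _ le_rfl, height_congr h (N - j - 1) (by omega),
    height_congr h (N - j) (by omega)]

theorem count_succ (w : ℕ → Bool) (b : Bool) (m : ℕ) :
    count w b (m + 1) = count w b m + if w m = b then 1 else 0 := by
  rw [count, Finset.range_add_one, Finset.filter_insert]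
  split_ifs <;> simp [count]

theorem count_mono (w : ℕ → Bool) (b : Bool) (h : m ≤ p) : count w b m ≤ count w b p :=
  Finset.card_le_card (Finset.filter_subset_filter _ (Finset.range_subset_range.2 h))

theorem count_lt_count {b : Bool} (hw : w m = b) (h : m < p) : count w b m < count w b p := by
  have := count_mono w b (show m + 1 ≤ p from h)
  rw [count_succ, if_pos hw] at this
  omega

theorem count_false_add_count_true (w : ℕ → Bool) (m : ℕ) :
    count w false m + count w true m = m := by
  induction m with
  | zero => rfl
  | succ m ih => rw [count_succ, count_succ]; cases w m <;> simp <;> omega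

theorem height_eq_count_sub_count (w : ℕ → Bool) (m : ℕ) :
    height w m = count w false m - count w true m := by
  induction m with
  | zero => rfl
  | succ m ih => rw [height_succ, count_succ, count_succ, ih]; cases w m <;> simp <;> ring

theorem lt_of_count_lt_count {b : Bool} (h : count w b m < count w b p) : m < p :=
  lt_of_not_ge fun hpm => (count_mono w b hpm).not_gt h

theorem IsBallot.count_true_le_count_false (hw : IsBallot w N) (hm : m ≤ N) :
    count w true m ≤ count w false m := by
  have := hw m hm
  rw [height_eq_count_sub_count] at this
  omega

theorem count_le_of_forall_lt {b : Bool} {L : ℕ} (h : ∀ j < m, w j = b → count w b j < L) :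
    count w b m ≤ L := by
  induction m with
  | zero => simp [count]
  | succ m ih =>
    rw [count_succ]
    split_ifs with hm
    · exact h m m.lt_succ_self hm
    · exact ih fun j hj => h j (by omega)

theorem count_eq_card_fin (w : ℕ → Bool) (b : Bool) (hm : m ≤ N) :
    count w b m = (Finset.univ.filter fun a : Fin N => (a : ℕ) < m ∧ w a = b).card := by
  rw [count, ← Finset.card_map Fin.valEmbedding]
  congr 1
  ext l
  simp only [Finset.mem_filter, Finset.mem_range, Finset.mem_map, Finset.mem_univ, true_and,
    Fin.valEmbedding_apply]
  exact ⟨fun h => ⟨⟨l, by omega⟩, h, rfl⟩, by rintro ⟨a, h, rfl⟩; exact h⟩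

theorem IsBallot.count_evac (hw : IsBallot w N) (b : Bool) :
    count (evac w N) b N = count w b N := by
  have hend := hw.height_evac_end
  rw [height_eq_count_sub_count, height_eq_count_sub_count] at hend
  have := count_false_add_count_true w N
  have := count_false_add_count_true (evac w N) N
  cases b <;> omega

theorem hasDescentAt_congr (h : ∀ l < N, w₁ l = w₂ l) {v : ℕ} (hv : v < N) :
    HasDescentAt w₁ v ↔ HasDescentAt w₂ v := by
  rw [HasDescentAt, HasDescentAt, h v hv, h (v - 1) (by omega)]

theorem count_congr (h : ∀ l < m, w₁ l = w₂ l) (b : Bool) : count w₁ b m = count w₂ b m :=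
  congrArg Finset.card (Finset.filter_congr fun x hx => by rw [h x (Finset.mem_range.1 hx)])

end BinaryWord

open BinaryWord

theorem IsSYT.bijective {outer inner : List ℕ}
    {pos : Fin (skewCells outer inner).card → ↥(skewCells outer inner)}
    (hS : IsSYT outer inner pos) : Function.Bijective pos :=
  (Fintype.bijective_iff_injective_and_card pos).2 ⟨hS.1, by simp⟩

abbrev TwoRowFilling (n k : ℕ) :=
  Fin (skewCells [n - k, k] []).card → ↥(skewCells [n - k, k] [])

section TwoRow

variable {n k : ℕ}

theorem mem_skewCells_twoRow {c : ℕ × ℕ} :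
    c ∈ skewCells [n - k, k] [] ↔ (c.1 = 0 ∧ c.2 < n - k) ∨ (c.1 = 1 ∧ c.2 < k) := by
  obtain ⟨r, c⟩ := c
  simp only [skewCells, Finset.mem_filter, Finset.mem_product, Finset.mem_range,
    List.length_cons, List.length_nil, List.foldr]
  constructor
  · rintro ⟨⟨hr, -⟩, -, h⟩
    interval_cases r <;> simp_all [List.getD]
  · rintro (⟨rfl, h⟩ | ⟨rfl, h⟩) <;> simp [List.getD] <;> omega

theorem card_skewCells_twoRow : (skewCells [n - k, k] []).card = n - k + k := by
  have hcells :
      skewCells [n - k, k] [] = {0} ×ˢ Finset.range (n - k) ∪ {1} ×ˢ Finset.range k := by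
    ext c
    simp only [mem_skewCells_twoRow, Finset.mem_union, Finset.mem_product, Finset.mem_singleton,
      Finset.mem_range]
  rw [hcells, Finset.card_union_of_disjoint (by simp [Finset.disjoint_left])]
  simp

def rowWord (pos : TwoRowFilling n k) (m : ℕ) : Bool :=
  if h : m < (skewCells [n - k, k] []).card then decide ((pos ⟨m, h⟩ : ℕ × ℕ).1 = 1)
  else false

theorem mem_twoRow (pos : TwoRowFilling n k) (j : Fin (skewCells [n - k, k] []).card) :
    ((pos j : ℕ × ℕ).1 = 0 ∧ (pos j : ℕ × ℕ).2 < n - k) ∨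
      ((pos j : ℕ × ℕ).1 = 1 ∧ (pos j : ℕ × ℕ).2 < k) :=
  mem_skewCells_twoRow.1 (pos j).2

variable {pos : TwoRowFilling n k}

theorem rowWord_apply (j : Fin (skewCells [n - k, k] []).card) :
    rowWord pos j = decide ((pos j : ℕ × ℕ).1 = 1) :=
  dif_pos j.isLt

theorem row_eq_ite_rowWord (j : Fin (skewCells [n - k, k] []).card) :
    (pos j : ℕ × ℕ).1 = if rowWord pos j then 1 else 0 := by
  rw [rowWord_apply]
  rcases mem_twoRow pos j with ⟨h, -⟩ | ⟨h, -⟩ <;> simp [h]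

theorem rowWord_eq_iff (a j : Fin (skewCells [n - k, k] []).card) :
    rowWord pos a = rowWord pos j ↔ (pos a : ℕ × ℕ).1 = (pos j : ℕ × ℕ).1 := by
  rw [row_eq_ite_rowWord a, row_eq_ite_rowWord j]
  cases rowWord pos a <;> cases rowWord pos j <;> simp

theorem col_eq_count_rowWord (hS : IsSYT [n - k, k] [] pos)
    (j : Fin (skewCells [n - k, k] []).card) :
    (pos j : ℕ × ℕ).2 = count (rowWord pos) (rowWord pos j) j := by
  rw [count_eq_card_fin _ _ j.isLt.le, ← Finset.card_range (pos j : ℕ × ℕ).2]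
  symm
  refine Finset.card_bij (fun a _ => (pos a : ℕ × ℕ).2) ?_ ?_ ?_
  · intro a ha
    simp only [Finset.mem_filter, Finset.mem_univ, true_and, rowWord_eq_iff] at ha
    rcases lt_trichotomy (pos a : ℕ × ℕ).2 (pos j : ℕ × ℕ).2 with h | h | h
    · exact Finset.mem_range.2 h
    · exact absurd (hS.1 (Subtype.ext (Prod.ext ha.2 h))) (Fin.ne_of_lt ha.1)
    · exact absurd (hS.2.1 j a ha.2.symm h) (not_lt.2 ha.1.le)
  · intro a ha b hb hab
    simp only [Finset.mem_filter, Finset.mem_univ, true_and, rowWord_eq_iff] at ha hb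
    exact hS.1 (Subtype.ext (Prod.ext (ha.2.trans hb.2.symm) hab))
  · intro c hc
    rw [Finset.mem_range] at hc
    have hcell : ((pos j : ℕ × ℕ).1, c) ∈ skewCells [n - k, k] [] := by
      rw [mem_skewCells_twoRow]
      rcases mem_twoRow pos j with ⟨h, h'⟩ | ⟨h, h'⟩
      · exact Or.inl ⟨h, by omega⟩
      · exact Or.inr ⟨h, by omega⟩
    obtain ⟨a, ha⟩ := hS.bijective.2 ⟨_, hcell⟩
    have hrow : (pos a : ℕ × ℕ).1 = (pos j : ℕ × ℕ).1 := by rw [ha]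
    have hlt : a < j := hS.2.1 a j hrow (by rw [ha]; exact hc)
    refine ⟨a, ?_, by rw [ha]⟩
    simp only [Finset.mem_filter, Finset.mem_univ, true_and, rowWord_eq_iff]
    exact ⟨hlt, hrow⟩

theorem row_lt_row_iff (a b : Fin (skewCells [n - k, k] []).card) :
    (pos a : ℕ × ℕ).1 < (pos b : ℕ × ℕ).1 ↔
      rowWord pos a = false ∧ rowWord pos b = true := by
  rw [row_eq_ite_rowWord a, row_eq_ite_rowWord b]
  cases rowWord pos a <;> cases rowWord pos b <;> simp

theorem mem_desSet_iff {v : ℕ} :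
    v ∈ desSet [n - k, k] [] pos ↔
      1 ≤ v ∧ v < (skewCells [n - k, k] []).card ∧ HasDescentAt (rowWord pos) v := by
  simp only [desSet, Finset.mem_filter, Finset.mem_range, row_lt_row_iff, HasDescentAt]
  constructor
  · rintro ⟨hv, a, b, rfl, hb, ha, hb'⟩
    exact ⟨by omega, hv, by simpa using ha, hb ▸ hb'⟩
  · rintro ⟨h1, hv, ha, hb⟩
    exact ⟨hv, ⟨v - 1, by omega⟩, ⟨v, hv⟩, by simp; omega, rfl, ha, hb⟩

def twoRowLength (n k : ℕ) : Bool → ℕ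
  | false => n - k
  | true => k

theorem count_rowWord_lt (hS : IsSYT [n - k, k] [] pos) (j : Fin (skewCells [n - k, k] []).card) :
    count (rowWord pos) (rowWord pos j) j < twoRowLength n k (rowWord pos j) := by
  rw [← col_eq_count_rowWord hS, rowWord_apply]
  rcases mem_twoRow pos j with ⟨h, h'⟩ | ⟨h, h'⟩ <;> simpa [h, twoRowLength]

theorem count_rowWord (hS : IsSYT [n - k, k] [] pos) (b : Bool) :
    count (rowWord pos) b (skewCells [n - k, k] []).card = twoRowLength n k b := by
  have hle : ∀ b, count (rowWord pos) b (skewCells [n - k, k] []).card ≤ twoRowLength n k b :=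
    fun b => count_le_of_forall_lt fun j hj hb => hb ▸ count_rowWord_lt hS ⟨j, hj⟩
  have htrue := hle true
  have hfalse := hle false
  have := count_false_add_count_true (rowWord pos) (skewCells [n - k, k] []).card
  have := card_skewCells_twoRow (n := n) (k := k)
  cases b <;> simp only [twoRowLength] at * <;> omega

/-- Column strictness matches each second-row entry with the smaller first-row entry above it. -/
theorem isBallot_rowWord (hkn : 2 * k ≤ n) (hS : IsSYT [n - k, k] [] pos) :
    IsBallot (rowWord pos) (skewCells [n - k, k] []).card := by
  intro m hm
  rw [height_eq_count_sub_count, sub_nonneg, Nat.cast_le]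
  refine count_le_of_forall_lt fun j hjm hj => ?_
  obtain ⟨b, rfl⟩ : ∃ b : Fin (skewCells [n - k, k] []).card, (b : ℕ) = j :=
    ⟨⟨j, by omega⟩, rfl⟩
  have hcol := col_eq_count_rowWord hS b
  have hrow : (pos b : ℕ × ℕ).1 = 1 := by simpa [rowWord_apply] using hj
  have hcell : (0, (pos b : ℕ × ℕ).2) ∈ skewCells [n - k, k] [] := by
    rw [mem_skewCells_twoRow]
    rcases mem_twoRow pos b with ⟨h, -⟩ | ⟨-, h⟩
    · omega
    · exact Or.inl ⟨rfl, by omega⟩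
  obtain ⟨a, ha⟩ := hS.bijective.2 ⟨_, hcell⟩
  have hab : a < b := hS.2.2 a b (by rw [ha]) (by rw [ha, hrow]; norm_num)
  have ha_false : rowWord pos a = false := by simp [rowWord_apply, ha]
  have hcola := col_eq_count_rowWord hS a
  rw [ha_false, ha] at hcola
  have : count (rowWord pos) false (a + 1) ≤ count (rowWord pos) false m :=
    count_mono _ _ (show (a : ℕ) + 1 ≤ m by rw [Fin.lt_def] at hab; omega)
  rw [count_succ, if_pos ha_false] at this
  rw [hj] at hcol
  simp only at hcola
  omega

end TwoRow

section Evacuation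

variable {n k : ℕ} {w w₁ w₂ : ℕ → Bool}

def ofWord (w : ℕ → Bool)
    (hw : ∀ b, count w b (skewCells [n - k, k] []).card = twoRowLength n k b) :
    TwoRowFilling n k :=
  fun j => ⟨(if w j then 1 else 0, count w (w j) j), by
    have hlt := (count_lt_count rfl j.isLt).trans_eq (hw (w j))
    rw [mem_skewCells_twoRow]
    cases h : w j <;> simp_all [twoRowLength]⟩

theorem ofWord_apply {hw : ∀ b, count w b (skewCells [n - k, k] []).card = twoRowLength n k b}
    (j : Fin (skewCells [n - k, k] []).card) :
    (ofWord w hw j : ℕ × ℕ) = (if w j then 1 else 0, count w (w j) j) := rfl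

theorem rowWord_ofWord
    (hw : ∀ b, count w b (skewCells [n - k, k] []).card = twoRowLength n k b) {l : ℕ}
    (hl : l < (skewCells [n - k, k] []).card) : rowWord (ofWord w hw) l = w l := by
  rw [rowWord, dif_pos hl, ofWord_apply]
  cases w l <;> simp

theorem ofWord_congr
    {hw₁ : ∀ b, count w₁ b (skewCells [n - k, k] []).card = twoRowLength n k b}
    {hw₂ : ∀ b, count w₂ b (skewCells [n - k, k] []).card = twoRowLength n k b}
    (h : ∀ l < (skewCells [n - k, k] []).card, w₁ l = w₂ l) :
    ofWord w₁ hw₁ = ofWord w₂ hw₂ := by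
  funext j
  apply Subtype.ext
  rw [ofWord_apply, ofWord_apply, h j j.isLt,
    count_congr (fun l hl => h l (hl.trans j.isLt))]

theorem ofWord_rowWord {pos : TwoRowFilling n k} (hS : IsSYT [n - k, k] [] pos) :
    ofWord (rowWord pos) (count_rowWord hS) = pos := by
  funext j
  apply Subtype.ext
  rw [ofWord_apply]
  exact Prod.ext (row_eq_ite_rowWord j).symm (col_eq_count_rowWord hS j).symm

/-- The column condition is exactly the ballot property. -/
theorem isSYT_ofWord
    {hw : ∀ b, count w b (skewCells [n - k, k] []).card = twoRowLength n k b}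
    (hb : IsBallot w (skewCells [n - k, k] []).card) : IsSYT [n - k, k] [] (ofWord w hw) := by
  have hrow : ∀ a b : Fin (skewCells [n - k, k] []).card,
      (ofWord w hw a : ℕ × ℕ).1 = (ofWord w hw b : ℕ × ℕ).1 → w a = w b := by
    intro a b hab
    rw [ofWord_apply, ofWord_apply] at hab
    cases ha : w a <;> cases hb : w b <;> simp_all
  refine ⟨fun a b hab => ?_, fun a b hab hcol => ?_, fun a b hcol hab => ?_⟩
  · have hw := hrow a b (by rw [hab])
    have hcol := congrArg (fun c : ↥(skewCells [n - k, k] []) => (c : ℕ × ℕ).2) hab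
    simp only [ofWord_apply, hw] at hcol
    rcases lt_trichotomy (a : ℕ) b with h | h | h
    · exact absurd hcol (count_lt_count hw h).ne
    · exact Fin.ext h
    · exact absurd hcol (count_lt_count rfl h).ne'
  · rw [ofWord_apply, ofWord_apply, hrow a b hab] at hcol
    exact lt_of_count_lt_count hcol
  · rw [ofWord_apply, ofWord_apply] at hab hcol
    obtain ⟨ha, hb'⟩ : w a = false ∧ w b = true := by
      revert hab; cases w a <;> cases w b <;> simp
    simp only [ha, hb'] at hcol
    have hballot := hb.count_true_le_count_false (m := b + 1) b.isLt
    rw [count_succ, count_succ, if_pos hb', if_neg (by simp [hb'])] at hballot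
    exact lt_of_count_lt_count (w := w) (b := false) (by omega)

/-- Schützenberger's evacuation of a two-row standard tableau, computed on its ballot word. -/
def evacTableau (hkn : 2 * k ≤ n) (pos : TwoRowFilling n k) (hS : IsSYT [n - k, k] [] pos) :
    TwoRowFilling n k :=
  ofWord (evac (rowWord pos) (skewCells [n - k, k] []).card) fun b =>
    ((isBallot_rowWord hkn hS).count_evac b).trans (count_rowWord hS b)

variable {pos : TwoRowFilling n k}

theorem isSYT_evacTableau (hkn : 2 * k ≤ n) (hS : IsSYT [n - k, k] [] pos) :
    IsSYT [n - k, k] [] (evacTableau hkn pos hS) :=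
  isSYT_ofWord (isBallot_evac (isBallot_rowWord hkn hS))

theorem evacTableau_evacTableau (hkn : 2 * k ≤ n) (hS : IsSYT [n - k, k] [] pos) :
    evacTableau hkn (evacTableau hkn pos hS) (isSYT_evacTableau hkn hS) = pos := by
  refine (ofWord_congr fun l hl => ?_).trans (ofWord_rowWord hS)
  rw [evacTableau, evac_congr (fun l hl => rowWord_ofWord _ hl) l]
  exact (isBallot_rowWord hkn hS).evac_evac hl

theorem desSet_evacTableau (hkn : 2 * k ≤ n) (hS : IsSYT [n - k, k] [] pos) :
    desSet [n - k, k] [] (evacTableau hkn pos hS) =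
      (desSet [n - k, k] [] pos).image ((skewCells [n - k, k] []).card - ·) := by
  ext u
  simp only [Finset.mem_image, mem_desSet_iff]
  constructor
  · rintro ⟨hu, huN, hdes⟩
    rw [evacTableau, hasDescentAt_congr (fun l hl => rowWord_ofWord _ hl) huN,
      hasDescentAt_evac_iff hu (by omega)] at hdes
    exact ⟨_, ⟨by omega, by omega, hdes⟩, by omega⟩
  · rintro ⟨v, ⟨hv, hvN, hdes⟩, rfl⟩
    refine ⟨by omega, by omega, ?_⟩
    rw [evacTableau, hasDescentAt_congr (fun l hl => rowWord_ofWord _ hl) (by omega),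
      hasDescentAt_evac_iff (by omega) (by omega), Nat.sub_sub_self hvN.le]
    exact hdes

theorem desSet_injOn_sub :
    Set.InjOn ((skewCells [n - k, k] []).card - ·) (desSet [n - k, k] [] pos) := by
  intro x hx y hy hxy
  have := (mem_desSet_iff.1 hx).2.1
  have := (mem_desSet_iff.1 hy).2.1
  simp only at hxy
  omega

theorem desStat_evacTableau (hkn : 2 * k ≤ n) (hS : IsSYT [n - k, k] [] pos) :
    desStat [n - k, k] [] (evacTableau hkn pos hS) = desStat [n - k, k] [] pos := by
  rw [desStat, desSet_evacTableau, Finset.card_image_of_injOn desSet_injOn_sub, desStat]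

theorem majStat_evacTableau_add_majStat (hkn : 2 * k ≤ n) (hS : IsSYT [n - k, k] [] pos) :
    majStat [n - k, k] [] (evacTableau hkn pos hS) + majStat [n - k, k] [] pos =
      desStat [n - k, k] [] pos * (skewCells [n - k, k] []).card := by
  rw [majStat, majStat, desSet_evacTableau, Finset.sum_image desSet_injOn_sub,
    ← Finset.sum_add_distrib, desStat, ← smul_eq_mul, ← Finset.sum_const]
  refine Finset.sum_congr rfl fun v hv => ?_
  have := (mem_desSet_iff.1 hv).2.1
  simp only [id]
  omega

end Evacuation

theorem stmt4_general (n k i : ℕ) (hkn : 2 * k ≤ n) :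
    (∀ s : ℕ, s ≤ n * i →
      (fPoly [n - k, k] i).coeff s = (fPoly [n - k, k] i).coeff (n * i - s)) ∧
    (∀ s : ℕ, n * i < s → (fPoly [n - k, k] i).coeff s = 0) := by
  have hcard : (skewCells [n - k, k] []).card = n := by
    rw [card_skewCells_twoRow]
    omega
  have hmem : ∀ pos, pos ∈ (SYTs [n - k, k] []).filter (desStat [n - k, k] [] · = i) ↔
      IsSYT [n - k, k] [] pos ∧ desStat [n - k, k] [] pos = i := by
    simp [SYTs]
  refine coeff_sum_X_pow_of_involution (fun pos hpos => evacTableau hkn pos ((hmem pos).1 hpos).1)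
    (fun pos hpos => ?_) (fun pos hpos => evacTableau_evacTableau hkn _) (fun pos hpos => ?_)
  · obtain ⟨hS, hdes⟩ := (hmem pos).1 hpos
    exact (hmem _).2 ⟨isSYT_evacTableau hkn hS, (desStat_evacTableau hkn hS).trans hdes⟩
  · obtain ⟨hS, hdes⟩ := (hmem pos).1 hpos
    rw [majStat_evacTableau_add_majStat, hdes, hcard, mul_comm]

/-- For integers `i ≥ 1`, `i ≤ k`, `2k ≤ n`, the polynomial
`f_{(n-k,k),i}(q)` is symmetric with central degree `ni/2`; that is,
`q^{ni} · f_{(n-k,k),i}(1/q) = f_{(n-k,k),i}(q)`, expressed coefficientwise: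
the coefficient of `q^s` equals that of `q^{ni-s}` for `s ≤ ni`, and all
coefficients above degree `ni` vanish. -/
theorem stmt4 (n k i : ℕ) (hi : 1 ≤ i) (hik : i ≤ k) (hkn : 2 * k ≤ n) :
    (∀ s : ℕ, s ≤ n * i →
      (fPoly [n - k, k] i).coeff s = (fPoly [n - k, k] i).coeff (n * i - s)) ∧
    (∀ s : ℕ, n * i < s → (fPoly [n - k, k] i).coeff s = 0) :=
  stmt4_general n k i hkn
end
end
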